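/- arXiv:1403.3965 — 8 statements merged into one kernel-verified Lean document; each statement's English description precedes it below -/
import Mathlib

section
/- Let v : [0,1]×[0,1] → ℝ be twice continuously differentiable on the closed square [0,1]×[0,1], satisfy the wave equation ∂_t² v(t,x) = ∂_x² v(t,x) on [0,1]×[0,1], and have initial data v(0,x) = v₀(x) and ∂_t v(0,x) = v₁(x) for x ∈ [0,1], where v₀ is continuously differentiable. Then for every t ∈ [0,1] the trace identity v(t,0) + ∫_0^t ∂_x v(s,0) ds = v₀(t) + ∫_0^t v₁(s) ds holds; this is the identity obtained by matching the two d'Alembert representations of v at the point (t/2, t/2). -/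
/-! The Riemann invariant `∂_t v + ∂_x v` is constant along the characteristics `t + x = c`
(its derivative along them is `∂_t² v - ∂_x² v = 0`), so its trace
`∂_t v(s,0) + ∂_x v(s,0)` on `x = 0` equals its value `v₁(s) + ∂_x v(0,s)` at `(0,s)`.
Integrating over `s ∈ [0,t]`, the fundamental theorem of calculus in `t` on the left and
in `x` on the right gives the identity. -/

open Set Real MeasureTheory intervalIntegral

/-- A classical solution of the wave equation `∂_t² v = ∂_x² v` on `[0,T] × [0,1]`:
`v` is twice continuously differentiable up to the boundary, with first partial
derivatives `vt`, `vx`, second partial derivatives `vtt`, `vxx` and mixed partial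
derivative `vtx`, all continuous on the closed rectangle. -/
structure IsWaveSol (T : ℝ) (v vt vx vtt vtx vxx : ℝ → ℝ → ℝ) : Prop where
  contv : ContinuousOn (fun p : ℝ × ℝ => v p.1 p.2) (Icc 0 T ×ˢ Icc 0 1)
  hvt : ∀ t ∈ Icc (0:ℝ) T, ∀ x ∈ Icc (0:ℝ) 1, HasDerivAt (fun τ => v τ x) (vt t x) t
  hvx : ∀ t ∈ Icc (0:ℝ) T, ∀ x ∈ Icc (0:ℝ) 1, HasDerivAt (fun y => v t y) (vx t x) x
  hvtt : ∀ t ∈ Icc (0:ℝ) T, ∀ x ∈ Icc (0:ℝ) 1, HasDerivAt (fun τ => vt τ x) (vtt t x) t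
  hvtx : ∀ t ∈ Icc (0:ℝ) T, ∀ x ∈ Icc (0:ℝ) 1, HasDerivAt (fun y => vt t y) (vtx t x) x
  hvxt : ∀ t ∈ Icc (0:ℝ) T, ∀ x ∈ Icc (0:ℝ) 1, HasDerivAt (fun τ => vx τ x) (vtx t x) t
  hvxx : ∀ t ∈ Icc (0:ℝ) T, ∀ x ∈ Icc (0:ℝ) 1, HasDerivAt (fun y => vx t y) (vxx t x) x
  contvt : ContinuousOn (fun p : ℝ × ℝ => vt p.1 p.2) (Icc 0 T ×ˢ Icc 0 1)
  contvx : ContinuousOn (fun p : ℝ × ℝ => vx p.1 p.2) (Icc 0 T ×ˢ Icc 0 1)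
  contvtt : ContinuousOn (fun p : ℝ × ℝ => vtt p.1 p.2) (Icc 0 T ×ˢ Icc 0 1)
  contvtx : ContinuousOn (fun p : ℝ × ℝ => vtx p.1 p.2) (Icc 0 T ×ˢ Icc 0 1)
  contvxx : ContinuousOn (fun p : ℝ × ℝ => vxx p.1 p.2) (Icc 0 T ×ˢ Icc 0 1)
  wave : ∀ t ∈ Icc (0:ℝ) T, ∀ x ∈ Icc (0:ℝ) 1, vtt t x = vxx t x

open Filter Topology

theorem hasDerivAt_comp_antidiagonal {f ft fx : ℝ → ℝ → ℝ} {a c : ℝ}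
    (hft : ∀ᶠ p : ℝ × ℝ in 𝓝 (a, c - a), HasDerivAt (fun τ => f τ p.2) (ft p.1 p.2) p.1)
    (hfx : ∀ᶠ p : ℝ × ℝ in 𝓝 (a, c - a), HasDerivAt (fun y => f p.1 y) (fx p.1 p.2) p.2)
    (hftc : ContinuousAt (fun p : ℝ × ℝ => ft p.1 p.2) (a, c - a))
    (hfxc : ContinuousAt (fun p : ℝ × ℝ => fx p.1 p.2) (a, c - a)) :
    HasDerivAt (fun s => f s (c - s)) (ft a (c - a) - fx a (c - a)) a := by
  have hf := hasStrictFDerivAt_uncurry_coprod (f := f)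
    (f₁ := fun t x => (1 : ℝ →L[ℝ] ℝ).smulRight (ft t x))
    (f₂ := fun t x => (1 : ℝ →L[ℝ] ℝ).smulRight (fx t x))
    (hft.mono fun p hp => hasDerivAt_iff_hasFDerivAt.mp hp)
    (hfx.mono fun p hp => hasDerivAt_iff_hasFDerivAt.mp hp)
    ((ContinuousLinearMap.smulRightL ℝ ℝ ℝ 1).continuous.continuousAt.comp hftc)
    ((ContinuousLinearMap.smulRightL ℝ ℝ ℝ 1).continuous.continuousAt.comp hfxc)
  have hpath : HasDerivAt (fun s : ℝ => (s, c - s)) (1, -1) a :=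
    (hasDerivAt_id a).prodMk ((hasDerivAt_id a).const_sub c)
  refine (hf.hasFDerivAt.comp_hasDerivAt a hpath).congr_deriv ?_
  change (1:ℝ) * ft a (c - a) + (-1) * fx a (c - a) = _
  ring

namespace IsWaveSol

variable {T : ℝ} {v vt vx vtt vtx vxx : ℝ → ℝ → ℝ}

theorem integral_vt_eq (hv : IsWaveSol T v vt vx vtt vtx vxx) {t x : ℝ}
    (ht : t ∈ Icc 0 T) (hx : x ∈ Icc (0:ℝ) 1) :
    ∫ s in (0:ℝ)..t, vt s x = v t x - v 0 x := by
  have hsub : uIcc 0 t ⊆ Icc 0 T := by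
    rw [uIcc_of_le ht.1]; exact Icc_subset_Icc_right ht.2
  exact integral_eq_sub_of_hasDerivAt (fun s hs => hv.hvt s (hsub hs) x hx)
    ((hv.contvt.uncurry_right x hx).mono hsub).intervalIntegrable

theorem integral_vx_eq (hv : IsWaveSol T v vt vx vtt vtx vxx) {t x : ℝ}
    (ht : t ∈ Icc 0 T) (hx : x ∈ Icc (0:ℝ) 1) :
    ∫ y in (0:ℝ)..x, vx t y = v t x - v t 0 := by
  have hsub : uIcc 0 x ⊆ Icc (0:ℝ) 1 := by
    rw [uIcc_of_le hx.1]; exact Icc_subset_Icc_right hx.2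
  exact integral_eq_sub_of_hasDerivAt (fun y hy => hv.hvx t ht y (hsub hy))
    ((hv.contvx.uncurry_left t ht).mono hsub).intervalIntegrable

theorem hasDerivAt_riemannInvariant (hv : IsWaveSol T v vt vx vtt vtx vxx) {r c : ℝ}
    (hr : r ∈ Ioo 0 T) (hcr : c - r ∈ Ioo (0:ℝ) 1) :
    HasDerivAt (fun s => vt s (c - s) + vx s (c - s)) 0 r := by
  have hU : Icc 0 T ×ˢ Icc 0 1 ∈ 𝓝 (r, c - r) :=
    prod_mem_nhds (Icc_mem_nhds hr.1 hr.2) (Icc_mem_nhds hcr.1 hcr.2)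
  have hvt' := hasDerivAt_comp_antidiagonal
    (mem_of_superset hU fun p hp => hv.hvtt p.1 hp.1 p.2 hp.2)
    (mem_of_superset hU fun p hp => hv.hvtx p.1 hp.1 p.2 hp.2)
    (hv.contvtt.continuousAt hU) (hv.contvtx.continuousAt hU)
  have hvx' := hasDerivAt_comp_antidiagonal
    (mem_of_superset hU fun p hp => hv.hvxt p.1 hp.1 p.2 hp.2)
    (mem_of_superset hU fun p hp => hv.hvxx p.1 hp.1 p.2 hp.2)
    (hv.contvtx.continuousAt hU) (hv.contvxx.continuousAt hU)
  refine (hvt'.add hvx').congr_deriv ?_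
  rw [hv.wave r (Ioo_subset_Icc_self hr) (c - r) (Ioo_subset_Icc_self hcr)]
  ring

theorem riemannInvariant_trace_eq (hv : IsWaveSol T v vt vx vtt vtx vxx) {c : ℝ}
    (hcT : c ≤ T) (hc : c ∈ Icc (0:ℝ) 1) :
    vt c 0 + vx c 0 = vt 0 c + vx 0 c := by
  obtain rfl | hc0 := hc.1.eq_or_lt
  · rfl
  set G : ℝ → ℝ := fun r => vt r (c - r) + vx r (c - r)
  have hpath : MapsTo (fun r : ℝ => (r, c - r)) (Icc 0 c) (Icc 0 T ×ˢ Icc 0 1) :=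
    fun r hr => ⟨⟨hr.1, hr.2.trans hcT⟩, ⟨by linarith [hr.2], by linarith [hr.1, hc.2]⟩⟩
  have hGc : ContinuousOn G (Icc 0 c) :=
    (hv.contvt.comp (by fun_prop) hpath).add (hv.contvx.comp (by fun_prop) hpath)
  obtain ⟨r, hr, hG'⟩ := exists_hasDerivAt_eq_slope G (fun _ => 0) hc0 hGc fun r hr =>
    hv.hasDerivAt_riemannInvariant ⟨hr.1, hr.2.trans_le hcT⟩
      ⟨by linarith [hr.2], by linarith [hr.1, hc.2]⟩
  have hGeq : G c = G 0 := by
    rw [eq_comm, div_eq_zero_iff, sub_eq_zero] at hG'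
    exact hG'.resolve_right (by linarith)
  simpa [G] using hGeq

end IsWaveSol

theorem trace_identity_general (v vt vx vtt vtx vxx : ℝ → ℝ → ℝ) (v₀ v₁ : ℝ → ℝ)
    (hv : IsWaveSol 1 v vt vx vtt vtx vxx)
    (hv₀ : ∀ x ∈ Icc (0:ℝ) 1, v 0 x = v₀ x)
    (hv₁ : ∀ x ∈ Icc (0:ℝ) 1, vt 0 x = v₁ x) :
    ∀ t ∈ Icc (0:ℝ) 1,
      v t 0 + (∫ s in (0:ℝ)..t, vx s 0) = v₀ t + ∫ s in (0:ℝ)..t, v₁ s := by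
  intro t ht
  have h0 : (0:ℝ) ∈ Icc (0:ℝ) 1 := ⟨le_rfl, zero_le_one⟩
  have hsub : uIcc 0 t ⊆ Icc (0:ℝ) 1 := by
    rw [uIcc_of_le ht.1]; exact Icc_subset_Icc_right ht.2
  have integrable {f : ℝ → ℝ} (hf : ContinuousOn f (Icc 0 1)) : IntervalIntegrable f volume 0 t :=
    (hf.mono hsub).intervalIntegrable
  have hv₁c : ContinuousOn v₁ (Icc 0 1) :=
    (hv.contvt.uncurry_left 0 h0).congr fun x hx => (hv₁ x hx).symm
  have htrace : ∫ s in (0:ℝ)..t, (vt s 0 + vx s 0) = ∫ s in (0:ℝ)..t, (v₁ s + vx 0 s) :=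
    integral_congr fun s hs => by
      rw [hv.riemannInvariant_trace_eq (hsub hs).2 (hsub hs), hv₁ s (hsub hs)]
  rw [integral_add (integrable (hv.contvt.uncurry_right 0 h0))
      (integrable (hv.contvx.uncurry_right 0 h0)),
    integral_add (integrable hv₁c) (integrable (hv.contvx.uncurry_left 0 h0)),
    hv.integral_vt_eq ht h0, hv.integral_vx_eq h0 ht, hv₀ t ht, hv₀ 0 h0] at htrace
  linarith

/-- For a twice continuously differentiable solution of the wave
equation on the closed unit square with initial data `v(0,·) = v₀`, `∂_t v(0,·) = v₁`
(`v₀` continuously differentiable with derivative `v₀'`), the trace identity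
`v(t,0) + ∫_0^t ∂_x v(s,0) ds = v₀(t) + ∫_0^t v₁(s) ds` holds for every `t ∈ [0,1]`. -/
theorem trace_identity (v vt vx vtt vtx vxx : ℝ → ℝ → ℝ) (v₀ v₀' v₁ : ℝ → ℝ)
    (hv : IsWaveSol 1 v vt vx vtt vtx vxx)
    (hv₀ : ∀ x ∈ Icc (0:ℝ) 1, v 0 x = v₀ x)
    (hv₁ : ∀ x ∈ Icc (0:ℝ) 1, vt 0 x = v₁ x)
    (hv₀d : ∀ x ∈ Icc (0:ℝ) 1, HasDerivAt v₀ (v₀' x) x)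
    (hv₀c : ContinuousOn v₀' (Icc 0 1)) :
    ∀ t ∈ Icc (0:ℝ) 1,
      v t 0 + (∫ s in (0:ℝ)..t, vx s 0) = v₀ t + ∫ s in (0:ℝ)..t, v₁ s :=
  trace_identity_general v vt vx vtt vtx vxx v₀ v₁ hv hv₀ hv₁
end

section
/- Let (u,v) be a classical solution of Problem 1 (the heat–wave system) on [0,1] with initial data u₀, v₀, v₁, where v₀ is continuously differentiable on [0,1] and v₁ is continuous on [0,1]. Then for every t ∈ [0,1] one has ∂_x u(t,0) + u(t,0) = v₀′(t) + v₁(t); that is, Problem 1 reduces to a single equation on the interface for the Neumann trace g(t) = ∂_x u(t,0) and the Dirichlet trace u(t,0). -/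
/-!
Along a backward characteristic `σ ↦ (σ, c - σ)` of the wave equation the Riemann invariant
`∂_t v + ∂_x v` has derivative `∂_t² v - ∂_x² v = 0`, so it is constant. Following the
characteristic from `(t, 0)` down to `(0, t)` gives `∂_t v(t,0) + ∂_x v(t,0) = v₁(t) + v₀'(t)`,
and the coupling conditions turn the left-hand side into `u(t,0) + ∂_x u(t,0)`.
-/

open Set Real MeasureTheory intervalIntegral

/-- A classical solution of the heat equation `∂_t u = ∂_x² u` on `[0,T] × [−1,0]`:
`u` is continuous on the closed rectangle, the partial derivatives `ut = ∂_t u`,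
`ux = ∂_x u`, `uxx = ∂_x² u` exist and are continuous there, and `∂_t u = ∂_x² u`. -/
structure IsHeatSol (T : ℝ) (u ut ux uxx : ℝ → ℝ → ℝ) : Prop where
  contu : ContinuousOn (fun p : ℝ × ℝ => u p.1 p.2) (Icc 0 T ×ˢ Icc (-1) 0)
  hut : ∀ t ∈ Icc (0:ℝ) T, ∀ x ∈ Icc (-1:ℝ) 0, HasDerivAt (fun τ => u τ x) (ut t x) t
  hux : ∀ t ∈ Icc (0:ℝ) T, ∀ x ∈ Icc (-1:ℝ) 0, HasDerivAt (fun y => u t y) (ux t x) x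
  huxx : ∀ t ∈ Icc (0:ℝ) T, ∀ x ∈ Icc (-1:ℝ) 0, HasDerivAt (fun y => ux t y) (uxx t x) x
  contut : ContinuousOn (fun p : ℝ × ℝ => ut p.1 p.2) (Icc 0 T ×ˢ Icc (-1) 0)
  contux : ContinuousOn (fun p : ℝ × ℝ => ux p.1 p.2) (Icc 0 T ×ˢ Icc (-1) 0)
  contuxx : ContinuousOn (fun p : ℝ × ℝ => uxx p.1 p.2) (Icc 0 T ×ˢ Icc (-1) 0)
  heat : ∀ t ∈ Icc (0:ℝ) T, ∀ x ∈ Icc (-1:ℝ) 0, ut t x = uxx t x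

/-- Problem 1 (the heat–wave system) on `[0,T]` with initial data `u₀, v₀, v₁`:
the heat equation on `[0,T] × [−1,0]` and the wave equation on `[0,T] × [0,1]`,
coupled at the interface `x = 0` by `u(t,0) = ∂_t v(t,0)` (kinematic condition) and
`∂_x u(t,0) = ∂_x v(t,0)` (dynamic condition), with homogeneous boundary conditions
`u(t,−1) = v(t,1) = 0`. -/
structure Problem1 (T : ℝ) (u ut ux uxx v vt vx vtt vtx vxx : ℝ → ℝ → ℝ)
    (u₀ v₀ v₁ : ℝ → ℝ) : Prop where
  heatSol : IsHeatSol T u ut ux uxx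
  waveSol : IsWaveSol T v vt vx vtt vtx vxx
  kinematic : ∀ t ∈ Icc (0:ℝ) T, u t 0 = vt t 0
  dynamic : ∀ t ∈ Icc (0:ℝ) T, ux t 0 = vx t 0
  bdryu : ∀ t ∈ Icc (0:ℝ) T, u t (-1) = 0
  bdryv : ∀ t ∈ Icc (0:ℝ) T, v t 1 = 0
  initu : ∀ x ∈ Icc (-1:ℝ) 0, u 0 x = u₀ x
  initv : ∀ x ∈ Icc (0:ℝ) 1, v 0 x = v₀ x
  initvt : ∀ x ∈ Icc (0:ℝ) 1, vt 0 x = v₁ x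

open Filter Topology Asymptotics

theorem hasFDerivAt_uncurry_of_hasDerivAt_of_continuousAt
    {E : Type*} [NormedAddCommGroup E] [NormedSpace ℝ E]
    {f f₁ : ℝ → ℝ → E} {a b : ℝ} {B : E}
    (h₁ : ∀ᶠ p in 𝓝 (a, b), HasDerivAt (fun τ => f τ p.2) (f₁ p.1 p.2) p.1)
    (h₁c : ContinuousAt (Function.uncurry f₁) (a, b))
    (h₂ : HasDerivAt (f a) B b) :
    HasFDerivAt (Function.uncurry f)
      ((ContinuousLinearMap.fst ℝ ℝ ℝ).smulRight (f₁ a b) +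
        (ContinuousLinearMap.snd ℝ ℝ ℝ).smulRight B) (a, b) := by
  -- mean value theorem in the first variable, uniformly near `(a, b)` by continuity of `f₁`
  have hfst : (fun p : ℝ × ℝ => f p.1 p.2 - f a p.2 - (p.1 - a) • f₁ a b)
      =o[𝓝 (a, b)] fun p => p - (a, b) := by
    refine isLittleO_iff.2 fun ε hε => ?_
    have hnear : ∀ᶠ p in 𝓝 (a, b),
        HasDerivAt (fun τ => f τ p.2) (f₁ p.1 p.2) p.1 ∧ dist (f₁ p.1 p.2) (f₁ a b) ≤ ε :=
      h₁.and (h₁c.eventually (Metric.closedBall_mem_nhds _ hε))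
    obtain ⟨δ, hδ, hball⟩ := Metric.eventually_nhds_iff_ball.1 hnear
    filter_upwards [Metric.ball_mem_nhds (a, b) hδ] with p hp
    have hseg : ∀ σ ∈ uIcc a p.1, (σ, p.2) ∈ Metric.ball (a, b) δ := by
      intro σ hσ
      rw [Metric.mem_ball] at hp ⊢
      refine lt_of_le_of_lt ?_ hp
      simp only [Prod.dist_eq, Real.dist_eq]
      exact max_le_max (abs_sub_left_of_mem_uIcc hσ) le_rfl
    have hmvt := (convex_uIcc a p.1).norm_image_sub_le_of_norm_hasDerivWithin_le
      (f := fun σ => f σ p.2 - σ • f₁ a b) (f' := fun σ => f₁ σ p.2 - f₁ a b) (C := ε)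
      (fun σ hσ => (((hball _ (hseg σ hσ)).1).sub
        ((hasDerivAt_id σ).smul_const (f₁ a b)) |>.congr_deriv (by simp)).hasDerivWithinAt)
      (fun σ hσ => by simpa [dist_eq_norm] using (hball _ (hseg σ hσ)).2)
      left_mem_uIcc right_mem_uIcc
    calc ‖f p.1 p.2 - f a p.2 - (p.1 - a) • f₁ a b‖
        = ‖(f p.1 p.2 - p.1 • f₁ a b) - (f a p.2 - a • f₁ a b)‖ := by
          rw [sub_smul]; congr 1; abel
      _ ≤ ε * ‖p.1 - a‖ := hmvt
      _ ≤ ε * ‖p - (a, b)‖ := by gcongr; exact norm_fst_le (p - (a, b))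
  have hsnd : (fun p : ℝ × ℝ => f a p.2 - f a b - (p.2 - b) • B)
      =o[𝓝 (a, b)] fun p => p - (a, b) :=
    (h₂.isLittleO.comp_tendsto (continuous_snd.tendsto (a, b))).trans_isBigO
      (isBigO_of_le _ fun p => norm_snd_le (p - (a, b)))
  refine hasFDerivAt_iff_isLittleO.2 <| (hfst.add hsnd).congr_left fun p => ?_
  simp only [Function.uncurry, add_apply,
    ContinuousLinearMap.smulRight_apply, ContinuousLinearMap.coe_fst',
    ContinuousLinearMap.coe_snd', Prod.fst_sub, Prod.snd_sub]
  abel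

theorem hasDerivAt_comp_antidiagonal_of_hasDerivAt_of_continuousAt
    {E : Type*} [NormedAddCommGroup E] [NormedSpace ℝ E]
    {f f₁ : ℝ → ℝ → E} {s c : ℝ} {B : E}
    (h₁ : ∀ᶠ p in 𝓝 (s, c - s), HasDerivAt (fun τ => f τ p.2) (f₁ p.1 p.2) p.1)
    (h₁c : ContinuousAt (Function.uncurry f₁) (s, c - s))
    (h₂ : HasDerivAt (f s) B (c - s)) :
    HasDerivAt (fun σ => f σ (c - σ)) (f₁ s (c - s) - B) s := by
  have hline : HasDerivAt (fun σ : ℝ => (σ, c - σ)) ((1 : ℝ), (-1 : ℝ)) s :=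
    (hasDerivAt_id s).prodMk ((hasDerivAt_id s).const_sub c)
  refine ((hasFDerivAt_uncurry_of_hasDerivAt_of_continuousAt h₁ h₁c h₂).comp_hasDerivAt s
    hline).congr_deriv ?_
  simp [sub_eq_add_neg]

theorem eq_of_hasDerivAt_eq_zero_of_continuousOn {f : ℝ → ℝ} {a b : ℝ} (hab : a ≤ b)
    (hf : ContinuousOn f (Icc a b)) (hf' : ∀ x ∈ Ioo a b, HasDerivAt f 0 x) : f b = f a := by
  rcases hab.eq_or_lt with rfl | hab
  · rfl
  obtain ⟨_, _, hslope⟩ := exists_hasDerivAt_eq_slope f (fun _ => 0) hab hf hf'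
  rw [eq_comm, div_eq_zero_iff] at hslope
  rcases hslope with h | h <;> linarith

namespace IsWaveSol

variable {T : ℝ} {v vt vx vtt vtx vxx : ℝ → ℝ → ℝ}

theorem hasDerivAt_riemannInvariant_along_characteristic (hW : IsWaveSol T v vt vx vtt vtx vxx)
    {s c : ℝ} (hs : s ∈ Ioo 0 T) (hcs : c - s ∈ Ioo 0 1) :
    HasDerivAt (fun σ => vt σ (c - σ) + vx σ (c - σ)) 0 s := by
  have hnhds : Icc 0 T ×ˢ Icc 0 1 ∈ 𝓝 (s, c - s) :=
    prod_mem_nhds (Icc_mem_nhds hs.1 hs.2) (Icc_mem_nhds hcs.1 hcs.2)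
  have hsI := Ioo_subset_Icc_self hs
  have hcsI := Ioo_subset_Icc_self hcs
  have hvt := hasDerivAt_comp_antidiagonal_of_hasDerivAt_of_continuousAt
    (Filter.mem_of_superset hnhds fun p hp => hW.hvtt p.1 hp.1 p.2 hp.2)
    (hW.contvtt.continuousAt hnhds) (hW.hvtx s hsI (c - s) hcsI)
  have hvx := hasDerivAt_comp_antidiagonal_of_hasDerivAt_of_continuousAt
    (Filter.mem_of_superset hnhds fun p hp => hW.hvxt p.1 hp.1 p.2 hp.2)
    (hW.contvtx.continuousAt hnhds) (hW.hvxx s hsI (c - s) hcsI)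
  exact (hvt.add hvx).congr_deriv (by rw [hW.wave s hsI (c - s) hcsI]; ring)

theorem riemannInvariant_eq (hW : IsWaveSol T v vt vx vtt vtx vxx) {t x : ℝ}
    (ht : 0 ≤ t) (htT : t ≤ T) (hx : 0 ≤ x) (htx : t + x ≤ 1) :
    vt t x + vx t x = vt 0 (t + x) + vx 0 (t + x) := by
  have hchar : MapsTo (fun σ => (σ, t + x - σ)) (Icc 0 t) (Icc 0 T ×ˢ Icc 0 1) :=
    fun σ hσ => ⟨⟨hσ.1, hσ.2.trans htT⟩,
      by dsimp only; linarith [hσ.2], by dsimp only; linarith [hσ.1]⟩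
  have hcont : ContinuousOn (fun σ => (σ, t + x - σ)) (Icc 0 t) := by fun_prop
  have := eq_of_hasDerivAt_eq_zero_of_continuousOn ht
    ((hW.contvt.comp hcont hchar).add (hW.contvx.comp hcont hchar))
    fun σ hσ => hW.hasDerivAt_riemannInvariant_along_characteristic
      ⟨hσ.1, hσ.2.trans_le htT⟩ ⟨by linarith [hσ.2], by linarith [hσ.1]⟩
  simpa using this

end IsWaveSol

theorem problem1_interface_reduction_general (u ut ux uxx v vt vx vtt vtx vxx : ℝ → ℝ → ℝ)
    (u₀ v₀ v₀' v₁ : ℝ → ℝ)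
    (hP : Problem1 1 u ut ux uxx v vt vx vtt vtx vxx u₀ v₀ v₁)
    (hv₀d : ∀ x ∈ Icc (0:ℝ) 1, HasDerivAt v₀ (v₀' x) x) :
    ∀ t ∈ Icc (0:ℝ) 1, ux t 0 + u t 0 = v₀' t + v₁ t := by
  intro t ht
  have hinit : vx 0 t = v₀' t :=
    (uniqueDiffOn_Icc zero_lt_one t ht).eq_deriv _
      ((hP.waveSol.hvx 0 (left_mem_Icc.2 zero_le_one) t ht).hasDerivWithinAt.congr
        (fun y hy => (hP.initv y hy).symm) (hP.initv t ht).symm)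
      (hv₀d t ht).hasDerivWithinAt
  have hchar := hP.waveSol.riemannInvariant_eq ht.1 ht.2 le_rfl (by simpa using ht.2)
  rw [add_zero] at hchar
  rw [hP.dynamic t ht, hP.kinematic t ht, ← hinit, ← hP.initvt t ht]
  linarith

/-- For a classical solution `(u,v)` of Problem 1 (the heat–wave
system) on `[0,1]` with initial data `u₀, v₀, v₁`, where `v₀` is continuously
differentiable with derivative `v₀'` and `v₁` is continuous, the interface equation
`∂_x u(t,0) + u(t,0) = v₀'(t) + v₁(t)` holds for every `t ∈ [0,1]`. -/
theorem problem1_interface_reduction (u ut ux uxx v vt vx vtt vtx vxx : ℝ → ℝ → ℝ)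
    (u₀ v₀ v₀' v₁ : ℝ → ℝ)
    (hP : Problem1 1 u ut ux uxx v vt vx vtt vtx vxx u₀ v₀ v₁)
    (hv₀d : ∀ x ∈ Icc (0:ℝ) 1, HasDerivAt v₀ (v₀' x) x)
    (hv₀c : ContinuousOn v₀' (Icc 0 1))
    (hv₁c : ContinuousOn v₁ (Icc 0 1)) :
    ∀ t ∈ Icc (0:ℝ) 1, ux t 0 + u t 0 = v₀' t + v₁ t :=
  problem1_interface_reduction_general u ut ux uxx v vt vx vtt vtx vxx u₀ v₀ v₀' v₁ hP hv₀d
end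

section
/- Let u be a classical solution of the heat equation on [0,1]×[−1,0] with u(t,−1) = 0 for all t ∈ [0,1], and let v be a classical solution of the wave equation on [0,1]×[0,1] with v(t,1) = 0, initial data v(0,x) = v₀(x), ∂_t v(0,x) = v₁(x) (v₀ continuously differentiable), and Dirichlet boundary value v(t,0) = ∫_0^t u(s,0) ds for all t ∈ [0,1]. Assume furthermore that the interface equation ∂_x u(t,0) + u(t,0) = v₀′(t) + v₁(t) holds for all t ∈ [0,1]. Then the pair (u,v) satisfies the coupling conditions of Problem 1: u(t,0) = ∂_t v(t,0) and ∂_x u(t,0) = ∂_x v(t,0) for every t ∈ [0,1]. -/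
open Set Real MeasureTheory intervalIntegral

/-- Uniqueness of derivatives at points of `Icc 0 1` for functions agreeing on `Icc 0 1`. -/
lemma deriv_unique_Icc01 {f g : ℝ → ℝ} {a b : ℝ} {x : ℝ} (hx : x ∈ Icc (0:ℝ) 1)
    (hf : HasDerivAt f a x) (hg : HasDerivAt g b x)
    (hfg : ∀ y ∈ Icc (0:ℝ) 1, f y = g y) : a = b := by
  have h1 : HasDerivWithinAt f a (Icc 0 1) x := hf.hasDerivWithinAt
  have h2 : HasDerivWithinAt f b (Icc 0 1) x :=
    hg.hasDerivWithinAt.congr hfg (hfg x hx)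
  have hu := uniqueDiffOn_Icc_zero_one x hx
  rw [← h1.derivWithin hu, ← h2.derivWithin hu]

/-- Constancy of `vt + vx` along the characteristic `x + t = const` for a
solution of the wave equation with continuous second derivatives. -/
lemma char_const (vt vx vtt vtx vxx : ℝ → ℝ → ℝ)
    (hvtt : ∀ t ∈ Icc (0:ℝ) 1, ∀ x ∈ Icc (0:ℝ) 1, HasDerivAt (fun τ => vt τ x) (vtt t x) t)
    (hvtx : ∀ t ∈ Icc (0:ℝ) 1, ∀ x ∈ Icc (0:ℝ) 1, HasDerivAt (fun y => vt t y) (vtx t x) x)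
    (hvxt : ∀ t ∈ Icc (0:ℝ) 1, ∀ x ∈ Icc (0:ℝ) 1, HasDerivAt (fun τ => vx τ x) (vtx t x) t)
    (hvxx : ∀ t ∈ Icc (0:ℝ) 1, ∀ x ∈ Icc (0:ℝ) 1, HasDerivAt (fun y => vx t y) (vxx t x) x)
    (contvt : ContinuousOn (fun p : ℝ × ℝ => vt p.1 p.2) (Icc 0 1 ×ˢ Icc 0 1))
    (contvx : ContinuousOn (fun p : ℝ × ℝ => vx p.1 p.2) (Icc 0 1 ×ˢ Icc 0 1))
    (contvtt : ContinuousOn (fun p : ℝ × ℝ => vtt p.1 p.2) (Icc 0 1 ×ˢ Icc 0 1))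
    (contvtx : ContinuousOn (fun p : ℝ × ℝ => vtx p.1 p.2) (Icc 0 1 ×ˢ Icc 0 1))
    (contvxx : ContinuousOn (fun p : ℝ × ℝ => vxx p.1 p.2) (Icc 0 1 ×ˢ Icc 0 1))
    (wave : ∀ t ∈ Icc (0:ℝ) 1, ∀ x ∈ Icc (0:ℝ) 1, vtt t x = vxx t x)
    (t : ℝ) (ht : t ∈ Icc (0:ℝ) 1) :
    vt t 0 + vx t 0 = vt 0 t + vx 0 t := by
  rcases eq_or_lt_of_le ht.1 with h0 | h0
  · rw [← h0]
  set G : ℝ → ℝ := fun s => vt s (t - s) + vx s (t - s) with hG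
  have hmaps : ∀ s ∈ Icc (0:ℝ) t, (s, t - s) ∈ Icc (0:ℝ) 1 ×ˢ Icc (0:ℝ) 1 := by
    intro s hs
    have h1 : t - s ∈ Icc (0:ℝ) 1 := ⟨by linarith [hs.2], by linarith [hs.1, ht.2]⟩
    exact ⟨⟨hs.1, hs.2.trans ht.2⟩, h1⟩
  have hcurve : Continuous fun s : ℝ => ((s, t - s) : ℝ × ℝ) := by fun_prop
  have hcont : ContinuousOn G (Icc 0 t) :=
    (contvt.comp hcurve.continuousOn hmaps).add (contvx.comp hcurve.continuousOn hmaps)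
  have hder : ∀ s₀ ∈ Ico (0:ℝ) t, HasDerivWithinAt G 0 (Ici s₀) s₀ := by
    intro s₀ hs₀
    have hs₀1 : s₀ ∈ Icc (0:ℝ) 1 := ⟨hs₀.1, hs₀.2.le.trans ht.2⟩
    have hts₀ : t - s₀ ∈ Icc (0:ℝ) 1 := ⟨by linarith [hs₀.2], by linarith [hs₀.1, ht.2]⟩
    have hp₀ : ((s₀, t - s₀) : ℝ × ℝ) ∈ Icc (0:ℝ) 1 ×ˢ Icc (0:ℝ) 1 := ⟨hs₀1, hts₀⟩
    set K : ℝ := vtt s₀ (t - s₀) + vtx s₀ (t - s₀) with hK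
    have hKX : vtx s₀ (t - s₀) + vxx s₀ (t - s₀) = K := by
      rw [hK, wave s₀ hs₀1 _ hts₀]; ring
    rw [hasDerivWithinAt_iff_tendsto_slope, Metric.tendsto_nhdsWithin_nhds]
    intro ε hε
    have hW : ContinuousWithinAt (fun p : ℝ × ℝ => vtt p.1 p.2 + vtx p.1 p.2)
        (Icc 0 1 ×ˢ Icc 0 1) (s₀, t - s₀) := (contvtt.add contvtx) _ hp₀
    have hX : ContinuousWithinAt (fun p : ℝ × ℝ => vtx p.1 p.2 + vxx p.1 p.2)
        (Icc 0 1 ×ˢ Icc 0 1) (s₀, t - s₀) := (contvtx.add contvxx) _ hp₀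
    obtain ⟨δ₁, hδ₁pos, hδ₁⟩ := Metric.continuousWithinAt_iff.1 hW (ε/3) (by positivity)
    obtain ⟨δ₂, hδ₂pos, hδ₂⟩ := Metric.continuousWithinAt_iff.1 hX (ε/3) (by positivity)
    refine ⟨min (min δ₁ δ₂) (t - s₀), by
      have := hs₀.2; simp only [lt_min_iff]; exact ⟨⟨hδ₁pos, hδ₂pos⟩, by linarith⟩, ?_⟩
    intro s hs hdist
    have hss₀ : s₀ < s := lt_of_le_of_ne hs.1 (fun h => hs.2 h.symm)
    rw [Real.dist_eq, abs_of_nonneg (by linarith)] at hdist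
    have hst : s < t := by
      have := lt_of_lt_of_le hdist (min_le_right _ _); linarith
    have hdδ₁ : s - s₀ < δ₁ := lt_of_lt_of_le hdist ((min_le_left _ _).trans (min_le_left _ _))
    have hdδ₂ : s - s₀ < δ₂ := lt_of_lt_of_le hdist ((min_le_left _ _).trans (min_le_right _ _))
    have hs1 : s ∈ Icc (0:ℝ) 1 := ⟨by linarith [hs₀.1], by linarith [ht.2]⟩
    have hts : t - s ∈ Icc (0:ℝ) 1 := ⟨by linarith, by linarith [hs₀.1, ht.2]⟩
    -- integrability of the two integrands
    have hint₁ : IntervalIntegrable (fun τ => vtt τ (t-s) + vtx τ (t-s)) volume s₀ s := by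
      apply ContinuousOn.intervalIntegrable
      apply (contvtt.add contvtx).comp
        (by fun_prop : Continuous fun τ : ℝ => ((τ, t - s) : ℝ × ℝ)).continuousOn
      intro τ hτ
      rw [uIcc_of_le hss₀.le] at hτ
      exact ⟨⟨by linarith [hτ.1, hs₀.1], by linarith [hτ.2, hs1.2]⟩, hts⟩
    have hint₂ : IntervalIntegrable (fun y => vtx s₀ y + vxx s₀ y) volume (t-s₀) (t-s) := by
      apply ContinuousOn.intervalIntegrable
      apply (contvtx.add contvxx).comp
        (by fun_prop : Continuous fun y : ℝ => ((s₀, y) : ℝ × ℝ)).continuousOn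
      intro y hy
      rw [uIcc_comm, uIcc_of_le (by linarith : t - s ≤ t - s₀)] at hy
      exact ⟨hs₀1, ⟨by linarith [hy.1, hts.1], by linarith [hy.2, hts₀.2]⟩⟩
    -- FTC in the first variable
    have hI₁ : (∫ τ in s₀..s, (vtt τ (t-s) + vtx τ (t-s)))
        = (vt s (t-s) + vx s (t-s)) - (vt s₀ (t-s) + vx s₀ (t-s)) := by
      apply intervalIntegral.integral_eq_sub_of_hasDerivAt
        (f := fun a => vt a (t-s) + vx a (t-s)) _ hint₁
      intro τ hτ
      rw [uIcc_of_le hss₀.le] at hτ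
      have hτ1 : τ ∈ Icc (0:ℝ) 1 := ⟨by linarith [hτ.1, hs₀.1], by linarith [hτ.2, hs1.2]⟩
      exact (hvtt τ hτ1 _ hts).add (hvxt τ hτ1 _ hts)
    -- FTC in the second variable
    have hI₂ : (∫ y in (t-s₀)..(t-s), (vtx s₀ y + vxx s₀ y))
        = (vt s₀ (t-s) + vx s₀ (t-s)) - (vt s₀ (t-s₀) + vx s₀ (t-s₀)) := by
      apply intervalIntegral.integral_eq_sub_of_hasDerivAt
        (f := fun b => vt s₀ b + vx s₀ b) _ hint₂
      intro y hy
      rw [uIcc_comm, uIcc_of_le (by linarith : t - s ≤ t - s₀)] at hy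
      have hy1 : y ∈ Icc (0:ℝ) 1 := ⟨by linarith [hy.1, hts.1], by linarith [hy.2, hts₀.2]⟩
      exact (hvtx s₀ hs₀1 _ hy1).add (hvxx s₀ hs₀1 _ hy1)
    -- bounds on the centered integrals
    have hJ₁ : |∫ τ in s₀..s, ((vtt τ (t-s) + vtx τ (t-s)) - K)| ≤ (ε/3) * |s - s₀| := by
      rw [← Real.norm_eq_abs]
      apply intervalIntegral.norm_integral_le_of_norm_le_const
      intro τ hτ
      rw [uIoc_of_le hss₀.le] at hτ
      have hτ1 : τ ∈ Icc (0:ℝ) 1 := ⟨by linarith [hτ.1, hs₀.1], by linarith [hτ.2, hs1.2]⟩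
      have hmem : ((τ, t - s) : ℝ × ℝ) ∈ Icc (0:ℝ) 1 ×ˢ Icc (0:ℝ) 1 := ⟨hτ1, hts⟩
      have hd : dist ((τ, t - s) : ℝ × ℝ) ((s₀, t - s₀) : ℝ × ℝ) < δ₁ := by
        rw [Prod.dist_eq]
        apply max_lt
        · rw [Real.dist_eq, abs_of_nonneg (by simp; linarith [hτ.1] : (0:ℝ) ≤ τ - s₀)]
          linarith [hτ.2]
        · rw [Real.dist_eq, show (t - s) - (t - s₀) = -(s - s₀) by ring, abs_neg,
            abs_of_nonneg (by linarith)]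
          exact hdδ₁
      have := hδ₁ hmem hd
      rw [Real.dist_eq] at this
      simpa [Real.norm_eq_abs] using this.le
    have hJ₂ : |∫ y in (t-s₀)..(t-s), ((vtx s₀ y + vxx s₀ y) - K)| ≤ (ε/3) * |s - s₀| := by
      rw [← Real.norm_eq_abs]
      have : (ε/3) * |s - s₀| = (ε/3) * |(t - s) - (t - s₀)| := by
        congr 1
        rw [show (t - s) - (t - s₀) = -(s - s₀) by ring, abs_neg]
      rw [this]
      apply intervalIntegral.norm_integral_le_of_norm_le_const
      intro y hy
      rw [uIoc_comm, uIoc_of_le (by linarith : t - s ≤ t - s₀)] at hy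
      have hy1 : y ∈ Icc (0:ℝ) 1 := ⟨by linarith [hy.1, hts.1], by linarith [hy.2, hts₀.2]⟩
      have hmem : ((s₀, y) : ℝ × ℝ) ∈ Icc (0:ℝ) 1 ×ˢ Icc (0:ℝ) 1 := ⟨hs₀1, hy1⟩
      have hd : dist ((s₀, y) : ℝ × ℝ) ((s₀, t - s₀) : ℝ × ℝ) < δ₂ := by
        rw [Prod.dist_eq]
        apply max_lt
        · simpa using hδ₂pos
        · rw [Real.dist_eq, abs_of_nonpos (by linarith [hy.2] : y - (t - s₀) ≤ 0)]
          linarith [hy.1]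
      have := hδ₂ hmem hd
      rw [Real.dist_eq] at this
      simpa [Real.norm_eq_abs, hKX] using this.le
    -- splitting off the constant
    have hsplit₁ : (∫ τ in s₀..s, ((vtt τ (t-s) + vtx τ (t-s)) - K))
        = (∫ τ in s₀..s, (vtt τ (t-s) + vtx τ (t-s))) - (s - s₀) * K := by
      rw [intervalIntegral.integral_sub hint₁ intervalIntegrable_const,
        intervalIntegral.integral_const, smul_eq_mul]
    have hsplit₂ : (∫ y in (t-s₀)..(t-s), ((vtx s₀ y + vxx s₀ y) - K))
        = (∫ y in (t-s₀)..(t-s), (vtx s₀ y + vxx s₀ y)) + (s - s₀) * K := by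
      rw [intervalIntegral.integral_sub hint₂ intervalIntegrable_const,
        intervalIntegral.integral_const, smul_eq_mul]
      ring
    -- conclusion
    have hGdiff : G s - G s₀ = (∫ τ in s₀..s, ((vtt τ (t-s) + vtx τ (t-s)) - K))
        + (∫ y in (t-s₀)..(t-s), ((vtx s₀ y + vxx s₀ y) - K)) := by
      rw [hsplit₁, hsplit₂, hI₁, hI₂, hG]; ring
    rw [dist_zero_right, Real.norm_eq_abs, slope_def_field, abs_div,
      abs_of_nonneg (by linarith : (0:ℝ) ≤ s - s₀)]
    rw [div_lt_iff₀ (by linarith : (0:ℝ) < s - s₀)]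
    have habs : |s - s₀| = s - s₀ := abs_of_nonneg (by linarith)
    calc |G s - G s₀| ≤ (ε/3) * |s - s₀| + (ε/3) * |s - s₀| := by
          rw [hGdiff]; exact (abs_add_le _ _).trans (add_le_add hJ₁ hJ₂)
      _ < ε * (s - s₀) := by rw [habs]; nlinarith
  have hconst := constant_of_has_deriv_right_zero hcont hder t (right_mem_Icc.2 h0.le)
  simpa [hG] using hconst

/-- The clamp of `s` to `[0,1]`. -/
noncomputable def clamp01 (s : ℝ) : ℝ := max 0 (min 1 s)

lemma clamp01_mem (s : ℝ) : clamp01 s ∈ Icc (0:ℝ) 1 :=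
  ⟨le_max_left _ _, max_le zero_le_one (min_le_left _ _)⟩

lemma clamp01_eq {s : ℝ} (hs : s ∈ Icc (0:ℝ) 1) : clamp01 s = s := by
  rw [clamp01, min_eq_right hs.2, max_eq_right hs.1]

/-- The time derivative of the trace of `v` at the interface equals `u` there. -/
lemma trace_deriv (u : ℝ → ℝ → ℝ) (v vt : ℝ → ℝ → ℝ)
    (hcu : ContinuousOn (fun p : ℝ × ℝ => u p.1 p.2) (Icc 0 1 ×ˢ Icc (-1) 0))
    (hvt : ∀ t ∈ Icc (0:ℝ) 1, HasDerivAt (fun τ => v τ 0) (vt t 0) t)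
    (hdir : ∀ t ∈ Icc (0:ℝ) 1, v t 0 = ∫ s in (0:ℝ)..t, u s 0)
    (t : ℝ) (ht : t ∈ Icc (0:ℝ) 1) : u t 0 = vt t 0 := by
  set ub : ℝ → ℝ := fun s => u (clamp01 s) 0 with hub
  have hclamp : Continuous clamp01 := by unfold clamp01; fun_prop
  have hubc : Continuous ub :=
    hcu.comp_continuous (by fun_prop : Continuous fun s : ℝ => ((clamp01 s, 0) : ℝ × ℝ))
      (fun s => ⟨clamp01_mem s, by norm_num⟩)
  have hubeq : ∀ s ∈ Icc (0:ℝ) 1, ub s = u s 0 := fun s hs => by rw [hub]; simp [clamp01_eq hs]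
  have hf : ∀ τ ∈ Icc (0:ℝ) 1, v τ 0 = ∫ s in (0:ℝ)..τ, ub s := by
    intro τ hτ
    rw [hdir τ hτ]
    apply intervalIntegral.integral_congr
    intro s hs
    rw [uIcc_of_le hτ.1] at hs
    exact (hubeq s ⟨hs.1, hs.2.trans hτ.2⟩).symm
  have hfd : HasDerivAt (fun τ => ∫ s in (0:ℝ)..τ, ub s) (ub t) t :=
    (hubc.integral_hasStrictDerivAt 0 t).hasDerivAt
  have := deriv_unique_Icc01 ht (hvt t ht) hfd hf
  rw [this, hubeq t ht]

/-- Let `u` be a classical solution of the heat equation on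
`[0,1] × [−1,0]` with `u(t,−1) = 0`, and let `v` be a classical solution of the wave
equation on `[0,1] × [0,1]` with `v(t,1) = 0`, initial data `v₀, v₁` (`v₀`
continuously differentiable with derivative `v₀'`), and Dirichlet boundary value
`v(t,0) = ∫_0^t u(s,0) ds`. If the interface equation
`∂_x u(t,0) + u(t,0) = v₀'(t) + v₁(t)` holds on `[0,1]`, then `(u,v)` satisfies the
coupling conditions of Problem 1. -/
theorem interface_implies_coupling (u ut ux uxx v vt vx vtt vtx vxx : ℝ → ℝ → ℝ)
    (v₀ v₀' v₁ : ℝ → ℝ)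
    (hu : IsHeatSol 1 u ut ux uxx)
    (hbu : ∀ t ∈ Icc (0:ℝ) 1, u t (-1) = 0)
    (hv : IsWaveSol 1 v vt vx vtt vtx vxx)
    (hbv : ∀ t ∈ Icc (0:ℝ) 1, v t 1 = 0)
    (hv₀ : ∀ x ∈ Icc (0:ℝ) 1, v 0 x = v₀ x)
    (hv₁ : ∀ x ∈ Icc (0:ℝ) 1, vt 0 x = v₁ x)
    (hv₀d : ∀ x ∈ Icc (0:ℝ) 1, HasDerivAt v₀ (v₀' x) x)
    (hv₀c : ContinuousOn v₀' (Icc 0 1))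
    (hdir : ∀ t ∈ Icc (0:ℝ) 1, v t 0 = ∫ s in (0:ℝ)..t, u s 0)
    (hint : ∀ t ∈ Icc (0:ℝ) 1, ux t 0 + u t 0 = v₀' t + v₁ t) :
    ∀ t ∈ Icc (0:ℝ) 1, u t 0 = vt t 0 ∧ ux t 0 = vx t 0 := by
  have h01 : (0:ℝ) ∈ Icc (0:ℝ) 1 := by norm_num
  intro t ht
  have hvt0 : ∀ τ ∈ Icc (0:ℝ) 1, HasDerivAt (fun τ' => v τ' 0) (vt τ 0) τ := by
    intro τ hτ
    exact hv.hvt τ hτ 0 h01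
  have h1 : u t 0 = vt t 0 := trace_deriv u v vt hu.contu hvt0 hdir t ht
  refine ⟨h1, ?_⟩
  -- transport along characteristic
  have hchar := char_const vt vx vtt vtx vxx hv.hvtt hv.hvtx hv.hvxt hv.hvxx
    hv.contvt hv.contvx hv.contvtt hv.contvtx hv.contvxx hv.wave t ht
  -- vx 0 t = v₀' t
  have hvx0 : vx 0 t = v₀' t :=
    deriv_unique_Icc01 ht (hv.hvx 0 h01 t ht) (hv₀d t ht) hv₀
  have hvt0t : vt 0 t = v₁ t := hv₁ t ht
  have := hint t ht
  -- ux t 0 + u t 0 = v₀' t + v₁ t = vx 0 t + vt 0 t = vt t 0 + vx t 0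
  have hsum : ux t 0 + u t 0 = vt t 0 + vx t 0 := by
    rw [this, ← hvx0, ← hvt0t]; linarith [hchar]
  linarith [hsum, h1]
end

section
/- Let (u,v,h) be a classical solution of Problem 2 (the heat–wave system coupled through a point mass) on [0,1] with initial data u₀, v₀, v₁, where v₀ is continuously differentiable on [0,1] and v₁ is continuous on [0,1]. Then u(0,0) = 0 and for every t ∈ [0,1] one has ∂_x u(t,0) + u(t,0) + ∂_t u(t,0) = v₀′(t) + v₁(t); that is, the point-mass coupling adds the inertial term ∂_t u(t,0) (the derivative of the interface velocity c(t) = u(t,0)) to the interface equation. -/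
open Set Real MeasureTheory intervalIntegral

/-- Problem 2 (the heat–wave system coupled through a point mass) on `[0,T]` with
initial data `u₀, v₀, v₁`: the heat equation on `[0,T] × [−1,0]` and the wave
equation on `[0,T] × [0,1]`, coupled at the interface `x = 0` through a point mass
with displacement `h` (a twice continuously differentiable function with first and
second derivatives `h'` and `h''`), via `u(t,0) = h'(t) = ∂_t v(t,0)` and Newton's
law `h''(t) = ∂_x v(t,0) − ∂_x u(t,0)`, with homogeneous boundary conditions
`u(t,−1) = v(t,1) = 0` and `h(0) = h'(0) = 0`. -/
structure Problem2 (T : ℝ) (u ut ux uxx v vt vx vtt vtx vxx : ℝ → ℝ → ℝ)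
    (h h' h'' : ℝ → ℝ) (u₀ v₀ v₁ : ℝ → ℝ) : Prop where
  heatSol : IsHeatSol T u ut ux uxx
  waveSol : IsWaveSol T v vt vx vtt vtx vxx
  hd : ∀ t ∈ Icc (0:ℝ) T, HasDerivAt h (h' t) t
  hdd : ∀ t ∈ Icc (0:ℝ) T, HasDerivAt h' (h'' t) t
  conth'' : ContinuousOn h'' (Icc 0 T)
  kinematic1 : ∀ t ∈ Icc (0:ℝ) T, u t 0 = h' t
  kinematic2 : ∀ t ∈ Icc (0:ℝ) T, h' t = vt t 0
  newton : ∀ t ∈ Icc (0:ℝ) T, h'' t = vx t 0 - ux t 0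
  bdryu : ∀ t ∈ Icc (0:ℝ) T, u t (-1) = 0
  bdryv : ∀ t ∈ Icc (0:ℝ) T, v t 1 = 0
  initu : ∀ x ∈ Icc (-1:ℝ) 0, u 0 x = u₀ x
  inith : h 0 = 0
  inith' : h' 0 = 0
  initv : ∀ x ∈ Icc (0:ℝ) 1, v 0 x = v₀ x
  initvt : ∀ x ∈ Icc (0:ℝ) 1, vt 0 x = v₁ x



private lemma eq_deriv_of_eqOn_Icc {g₁ g₂ : ℝ → ℝ} {d₁ d₂ x : ℝ} (hx : x ∈ Icc (0:ℝ) 1)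
    (heq : EqOn g₁ g₂ (Icc 0 1)) (h1 : HasDerivAt g₁ d₁ x) (h2 : HasDerivAt g₂ d₂ x) :
    d₁ = d₂ :=
  (uniqueDiffOn_Icc one_pos x hx).eq_deriv _ h1.hasDerivWithinAt
    ((h2.hasDerivWithinAt).congr (fun y hy => heq hy) (heq hx))

private lemma diag_hasDerivAt (f ft fx : ℝ → ℝ → ℝ)
    (hdt : ∀ t ∈ Icc (0:ℝ) 1, ∀ x ∈ Icc (0:ℝ) 1, HasDerivAt (fun τ => f τ x) (ft t x) t)
    (hdx : ∀ t ∈ Icc (0:ℝ) 1, ∀ x ∈ Icc (0:ℝ) 1, HasDerivAt (fun y => f t y) (fx t x) x)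
    (hct : ContinuousOn (fun p : ℝ × ℝ => ft p.1 p.2) (Icc 0 1 ×ˢ Icc 0 1))
    (hcx : ContinuousOn (fun p : ℝ × ℝ => fx p.1 p.2) (Icc 0 1 ×ˢ Icc 0 1))
    {a s : ℝ} (ha : a ∈ Ioo (0:ℝ) 1) (hs : s ∈ Ioo (0:ℝ) 1) :
    HasDerivAt (fun σ => f (a + s - σ) σ) (fx a s - ft a s) s := by
  rw [hasDerivAt_iff_isLittleO, Asymptotics.isLittleO_iff]
  intro ε hε
  have haI : a ∈ Icc (0:ℝ) 1 := Ioo_subset_Icc_self ha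
  have hsI : s ∈ Icc (0:ℝ) 1 := Ioo_subset_Icc_self hs
  have hQ : Icc (0:ℝ) 1 ×ˢ Icc (0:ℝ) 1 ∈ nhds ((a, s) : ℝ × ℝ) :=
    prod_mem_nhds (Icc_mem_nhds ha.1 ha.2) (Icc_mem_nhds hs.1 hs.2)
  obtain ⟨δ₁, hδ₁, H₁⟩ := Metric.continuousAt_iff.mp (hct.continuousAt hQ) (ε/2) (by linarith)
  obtain ⟨δ₂, hδ₂, H₂⟩ := Metric.continuousAt_iff.mp (hcx.continuousAt hQ) (ε/2) (by linarith)
  set m := min (min s (1 - s)) (min a (1 - a)) with hm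
  have hmpos : 0 < m := by
    simp only [hm, lt_min_iff]
    exact ⟨⟨hs.1, by linarith [hs.2]⟩, ha.1, by linarith [ha.2]⟩
  have hm1 : m ≤ s := (min_le_left _ _).trans (min_le_left _ _)
  have hm2 : m ≤ 1 - s := (min_le_left _ _).trans (min_le_right _ _)
  have hm3 : m ≤ a := (min_le_right _ _).trans (min_le_left _ _)
  have hm4 : m ≤ 1 - a := (min_le_right _ _).trans (min_le_right _ _)
  set δ := min (min δ₁ δ₂) m with hδdef
  have hδpos : 0 < δ := lt_min (lt_min hδ₁ hδ₂) hmpos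
  filter_upwards [Metric.ball_mem_nhds s hδpos] with σ hσ
  rw [Metric.mem_ball, Real.dist_eq] at hσ
  have hσm : |σ - s| < m := lt_of_lt_of_le hσ (min_le_right _ _)
  have hσδ₁ : |σ - s| < δ₁ := lt_of_lt_of_le hσ ((min_le_left _ _).trans (min_le_left _ _))
  have hσδ₂ : |σ - s| < δ₂ := lt_of_lt_of_le hσ ((min_le_left _ _).trans (min_le_right _ _))
  have habs := abs_lt.mp hσm
  have hσI : σ ∈ Icc (0:ℝ) 1 := ⟨by linarith [habs.1], by linarith [habs.2]⟩
  have hbI : a + s - σ ∈ Icc (0:ℝ) 1 := ⟨by linarith [habs.2], by linarith [habs.1]⟩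
  -- memberships for points between
  have hyIcc : ∀ y ∈ uIcc s σ, y ∈ Icc (0:ℝ) 1 := fun y hy => uIcc_subset_Icc hsI hσI hy
  have hτIcc : ∀ τ ∈ uIcc a (a + s - σ), τ ∈ Icc (0:ℝ) 1 := fun τ hτ =>
    uIcc_subset_Icc haI hbI hτ
  -- integrability
  have hint1 : IntervalIntegrable (fun y => fx a y) volume s σ := by
    apply ContinuousOn.intervalIntegrable
    have : ContinuousOn (fun y : ℝ => fx a y) (Icc (0:ℝ) 1) :=
      hcx.comp ((continuous_const.prodMk continuous_id).continuousOn)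
        (fun y hy => ⟨haI, hy⟩)
    exact this.mono (uIcc_subset_Icc hsI hσI)
  have hint2 : IntervalIntegrable (fun τ => ft τ σ) volume a (a + s - σ) := by
    apply ContinuousOn.intervalIntegrable
    have : ContinuousOn (fun τ : ℝ => ft τ σ) (Icc (0:ℝ) 1) :=
      hct.comp ((continuous_id.prodMk continuous_const).continuousOn)
        (fun τ hτ => ⟨hτ, hσI⟩)
    exact this.mono (uIcc_subset_Icc haI hbI)
  -- FTC pieces
  have hFTC1 : ∫ y in s..σ, fx a y = f a σ - f a s :=
    intervalIntegral.integral_eq_sub_of_hasDerivAt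
      (fun y hy => hdx a haI y (hyIcc y hy)) hint1
  have hFTC2 : ∫ τ in a..(a + s - σ), ft τ σ = f (a + s - σ) σ - f a σ :=
    intervalIntegral.integral_eq_sub_of_hasDerivAt
      (fun τ hτ => hdt τ (hτIcc τ hτ) σ hσI) hint2
  have e1 : ∫ y in s..σ, (fx a y - fx a s) = (f a σ - f a s) - (σ - s) * fx a s := by
    rw [intervalIntegral.integral_sub hint1 intervalIntegrable_const,
      intervalIntegral.integral_const, hFTC1, smul_eq_mul]
  have e2 : ∫ τ in a..(a + s - σ), (ft τ σ - ft a s)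
      = (f (a + s - σ) σ - f a σ) - (s - σ) * ft a s := by
    rw [intervalIntegral.integral_sub hint2 intervalIntegrable_const,
      intervalIntegral.integral_const, hFTC2, smul_eq_mul]
    ring_nf
  have hexpr : f (a + s - σ) σ - f (a + s - s) s - (σ - s) • (fx a s - ft a s)
      = (∫ τ in a..(a + s - σ), (ft τ σ - ft a s)) + ∫ y in s..σ, (fx a y - fx a s) := by
    rw [e1, e2, smul_eq_mul, show a + s - s = a from by ring]
    ring
  rw [hexpr]
  have bA : ‖∫ τ in a..(a + s - σ), (ft τ σ - ft a s)‖ ≤ (ε/2) * |a + s - σ - a| := by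
    apply intervalIntegral.norm_integral_le_of_norm_le_const
    intro τ hτ
    have hτ' : τ ∈ uIcc a (a + s - σ) := uIoc_subset_uIcc hτ
    have h1 : |τ - a| ≤ |a + s - σ - a| := abs_sub_left_of_mem_uIcc hτ'
    have h2 : |a + s - σ - a| = |σ - s| := by rw [show a + s - σ - a = -(σ - s) from by ring, abs_neg]
    have hd : dist ((τ, σ) : ℝ × ℝ) (a, s) < δ₁ := by
      rw [Prod.dist_eq, Real.dist_eq, Real.dist_eq]
      exact max_lt (lt_of_le_of_lt (h1.trans_eq h2) hσδ₁) hσδ₁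
    have := H₁ hd
    rw [Real.dist_eq] at this
    exact le_of_lt this
  have bB : ‖∫ y in s..σ, (fx a y - fx a s)‖ ≤ (ε/2) * |σ - s| := by
    apply intervalIntegral.norm_integral_le_of_norm_le_const
    intro y hy
    have h1 : |y - s| ≤ |σ - s| := abs_sub_left_of_mem_uIcc (uIoc_subset_uIcc hy)
    have hd : dist ((a, y) : ℝ × ℝ) (a, s) < δ₂ := by
      rw [Prod.dist_eq, Real.dist_eq, Real.dist_eq, sub_self, abs_zero]
      exact max_lt hδ₂ (lt_of_le_of_lt h1 hσδ₂)
    have := H₂ hd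
    rw [Real.dist_eq] at this
    exact le_of_lt this
  have h2 : |a + s - σ - a| = |σ - s| := by
    rw [show a + s - σ - a = -(σ - s) from by ring, abs_neg]
  calc ‖(∫ τ in a..(a + s - σ), (ft τ σ - ft a s)) + ∫ y in s..σ, (fx a y - fx a s)‖
      ≤ ‖∫ τ in a..(a + s - σ), (ft τ σ - ft a s)‖ + ‖∫ y in s..σ, (fx a y - fx a s)‖ :=
        norm_add_le _ _
    _ ≤ (ε/2) * |σ - s| + (ε/2) * |σ - s| := by
        refine add_le_add (bA.trans_eq ?_) bB
        rw [h2]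
    _ = ε * ‖σ - s‖ := by rw [Real.norm_eq_abs]; ring

private lemma char_integral (f ft fx : ℝ → ℝ → ℝ)
    (hcf : ContinuousOn (fun p : ℝ × ℝ => f p.1 p.2) (Icc 0 1 ×ˢ Icc 0 1))
    (hdt : ∀ t ∈ Icc (0:ℝ) 1, ∀ x ∈ Icc (0:ℝ) 1, HasDerivAt (fun τ => f τ x) (ft t x) t)
    (hdx : ∀ t ∈ Icc (0:ℝ) 1, ∀ x ∈ Icc (0:ℝ) 1, HasDerivAt (fun y => f t y) (fx t x) x)
    (hct : ContinuousOn (fun p : ℝ × ℝ => ft p.1 p.2) (Icc 0 1 ×ˢ Icc 0 1))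
    (hcx : ContinuousOn (fun p : ℝ × ℝ => fx p.1 p.2) (Icc 0 1 ×ˢ Icc 0 1))
    {t : ℝ} (ht : t ∈ Icc (0:ℝ) 1) :
    f 0 t - f t 0 = ∫ s in (0:ℝ)..t, (fx (t - s) s - ft (t - s) s) := by
  have hmaps : MapsTo (fun σ : ℝ => ((t - σ, σ) : ℝ × ℝ)) (Icc 0 t)
      (Icc (0:ℝ) 1 ×ˢ Icc (0:ℝ) 1) := by
    intro σ hσ
    rw [mem_Icc] at hσ
    simp only [mem_prod, mem_Icc]
    exact ⟨⟨by linarith, by linarith [ht.2]⟩, hσ.1, by linarith [ht.2]⟩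
  have hγ : Continuous (fun σ : ℝ => ((t - σ, σ) : ℝ × ℝ)) :=
    (continuous_const.sub continuous_id).prodMk continuous_id
  have key := intervalIntegral.integral_eq_sub_of_hasDeriv_right_of_le ht.1
    (f := fun σ => f (t - σ) σ) (f' := fun σ => fx (t - σ) σ - ft (t - σ) σ)
    (hcf.comp hγ.continuousOn hmaps)
    (fun σ hσ => by
      have h := diag_hasDerivAt f ft fx hdt hdx hct hcx
        (a := t - σ) (s := σ) ⟨by linarith [hσ.2], by linarith [hσ.1, ht.2]⟩
        ⟨hσ.1, lt_of_lt_of_le hσ.2 ht.2⟩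
      simp only [show t - σ + σ = t from by ring] at h
      exact h.hasDerivWithinAt)
    (by
      apply ContinuousOn.intervalIntegrable
      rw [uIcc_of_le ht.1]
      exact (hcx.comp hγ.continuousOn hmaps).sub (hct.comp hγ.continuousOn hmaps))
  rw [key]
  norm_num

/-- For a classical solution `(u,v,h)` of Problem 2 (the heat–wave
system coupled through a point mass) on `[0,1]` with initial data `u₀, v₀, v₁`, where
`v₀` is continuously differentiable with derivative `v₀'` and `v₁` is continuous, one
has `u(0,0) = 0` and the interface equation with inertia
`∂_x u(t,0) + u(t,0) + ∂_t u(t,0) = v₀'(t) + v₁(t)` holds for every `t ∈ [0,1]`. -/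
theorem problem2_interface_reduction (u ut ux uxx v vt vx vtt vtx vxx : ℝ → ℝ → ℝ)
    (h h' h'' : ℝ → ℝ) (u₀ v₀ v₀' v₁ : ℝ → ℝ)
    (hP : Problem2 1 u ut ux uxx v vt vx vtt vtx vxx h h' h'' u₀ v₀ v₁)
    (hv₀d : ∀ x ∈ Icc (0:ℝ) 1, HasDerivAt v₀ (v₀' x) x)
    (hv₀c : ContinuousOn v₀' (Icc 0 1))
    (hv₁c : ContinuousOn v₁ (Icc 0 1)) :
    u 0 0 = 0 ∧ ∀ t ∈ Icc (0:ℝ) 1, ux t 0 + u t 0 + ut t 0 = v₀' t + v₁ t := by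
  have h0 : (0:ℝ) ∈ Icc (0:ℝ) 1 := ⟨le_refl 0, by norm_num⟩
  constructor
  · rw [hP.kinematic1 0 h0, hP.inith']
  · intro t ht
    have hmem0 : (0:ℝ) ∈ Icc (-1:ℝ) 0 := ⟨by norm_num, le_refl 0⟩
    have hut_eq : ut t 0 = h'' t :=
      eq_deriv_of_eqOn_Icc ht (fun τ hτ => hP.kinematic1 τ hτ)
        (hP.heatSol.hut t ht 0 hmem0) (hP.hdd t ht)
    have hvx0 : vx 0 t = v₀' t :=
      eq_deriv_of_eqOn_Icc ht (fun x hx => hP.initv x hx)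
        (hP.waveSol.hvx 0 h0 t ht) (hv₀d t ht)
    have W := hP.waveSol
    have hchar1 := char_integral vt vtt vtx W.contvt W.hvtt W.hvtx W.contvtt W.contvtx ht
    have hchar2 := char_integral vx vtx vxx W.contvx W.hvxt W.hvxx W.contvtx W.contvxx ht
    have hcong : ∫ s in (0:ℝ)..t, (vtx (t-s) s - vtt (t-s) s)
        = ∫ s in (0:ℝ)..t, -(vxx (t-s) s - vtx (t-s) s) := by
      apply intervalIntegral.integral_congr
      intro s hs
      rw [uIcc_of_le ht.1, mem_Icc] at hs
      have hm1 : t - s ∈ Icc (0:ℝ) 1 := ⟨by linarith [hs.2], by linarith [hs.1, ht.2]⟩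
      have hm2 : s ∈ Icc (0:ℝ) 1 := ⟨hs.1, hs.2.trans ht.2⟩
      have := W.wave (t - s) hm1 s hm2
      simp only
      linarith
    have sum0 : (vt 0 t - vt t 0) + (vx 0 t - vx t 0) = 0 := by
      rw [hchar1, hchar2, hcong, intervalIntegral.integral_neg]; ring
    have e1 := hP.kinematic1 t ht
    have e2 := hP.kinematic2 t ht
    have e3 := hP.newton t ht
    have e4 := hP.initvt t ht
    linarith [sum0, e1, e2, e3, e4, hut_eq, hvx0]
end

section
/- Let u be a classical solution of the heat equation on [0,1]×[−1,0] with u(t,−1) = 0 for all t ∈ [0,1] and u(0,0) = 0, and set h(t) = ∫_0^t u(s,0) ds. Let v be a classical solution of the wave equation on [0,1]×[0,1] with v(t,1) = 0, v(t,0) = h(t) for all t ∈ [0,1], and initial data v(0,x) = v₀(x), ∂_t v(0,x) = v₁(x) (v₀ continuously differentiable). Assume the interface equation with inertia ∂_x u(t,0) + u(t,0) + ∂_t u(t,0) = v₀′(t) + v₁(t) holds for all t ∈ [0,1]. Then h is twice continuously differentiable with h(0) = h′(0) = 0, and (u,v,h) satisfies the point-mass coupling conditions of Problem 2: u(t,0)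 = h′(t) = ∂_t v(t,0) and h″(t) = ∂_x v(t,0) − ∂_x u(t,0) for every t ∈ [0,1]. -/
/-!
Since `v` solves the wave equation, the Riemann invariant `w = ∂_t v + ∂_x v` solves the
transport equation `∂_t w = ∂_x w`, so it is constant along the characteristics `t + x = const`:
`∂_t v(t,0) + ∂_x v(t,0) = ∂_t v(0,t) + ∂_x v(0,t) = v₁(t) + v₀'(t)`. Differentiating the
Dirichlet condition `v(t,0) = h(t)` gives `∂_t v(t,0) = h'(t) = u(t,0)`, and subtracting this
from the interface equation leaves `∂_t u(t,0) = ∂_x v(t,0) - ∂_x u(t,0)`.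
-/

open Set Real MeasureTheory intervalIntegral

open Filter Function ContinuousLinearMap

theorem hasFDerivAt_uncurry_of_hasDerivAt_of_continuousOn {w wt wx : ℝ → ℝ → ℝ}
    {U : Set (ℝ × ℝ)} (hU : IsOpen U)
    (hwt : ∀ p ∈ U, HasDerivAt (w · p.2) (wt p.1 p.2) p.1)
    (hwx : ∀ p ∈ U, HasDerivAt (w p.1 ·) (wx p.1 p.2) p.2)
    (cwt : ContinuousOn ↿wt U) (cwx : ContinuousOn ↿wx U) {p : ℝ × ℝ} (hp : p ∈ U) :
    HasFDerivAt ↿w ((toSpanSingleton ℝ (wt p.1 p.2)).coprod (toSpanSingleton ℝ (wx p.1 p.2))) p :=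
  (hasStrictFDerivAt_uncurry_coprod (f₁ := fun a b => toSpanSingleton ℝ (wt a b))
    (f₂ := fun a b => toSpanSingleton ℝ (wx a b))
    (eventually_of_mem (hU.mem_nhds hp) hwt) (eventually_of_mem (hU.mem_nhds hp) hwx)
    (toSpanSingletonCLE.continuous.continuousAt.comp (cwt.continuousAt (hU.mem_nhds hp)))
    (toSpanSingletonCLE.continuous.continuousAt.comp (cwx.continuousAt (hU.mem_nhds hp)))
    ).hasFDerivAt

theorem apply_eq_of_transport_equation {T : ℝ} {w wt wx : ℝ → ℝ → ℝ}
    (cw : ContinuousOn ↿w (Icc 0 T ×ˢ Icc 0 T))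
    (hwt : ∀ p ∈ Ioo 0 T ×ˢ Ioo 0 T, HasDerivAt (w · p.2) (wt p.1 p.2) p.1)
    (hwx : ∀ p ∈ Ioo 0 T ×ˢ Ioo 0 T, HasDerivAt (w p.1 ·) (wx p.1 p.2) p.2)
    (cwt : ContinuousOn ↿wt (Ioo 0 T ×ˢ Ioo 0 T)) (cwx : ContinuousOn ↿wx (Ioo 0 T ×ˢ Ioo 0 T))
    (heq : ∀ p ∈ Ioo 0 T ×ˢ Ioo 0 T, wt p.1 p.2 = wx p.1 p.2)
    {t : ℝ} (ht : t ∈ Icc 0 T) : w t 0 = w 0 t := by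
  rcases ht.1.eq_or_lt with rfl | ht0
  · rfl
  set Φ : ℝ → ℝ := fun s => w (t - s) s
  have hΦc : ContinuousOn Φ (Icc 0 t) :=
    cw.comp (f := fun s => (t - s, s)) (by fun_prop) fun s hs =>
      ⟨⟨by linarith [hs.2], by linarith [hs.1, ht.2]⟩, ⟨hs.1, hs.2.trans ht.2⟩⟩
  have hΦd : ∀ s ∈ Ioo 0 t, HasDerivAt Φ 0 s := by
    intro s hs
    have hp : (t - s, s) ∈ Ioo 0 T ×ˢ Ioo 0 T :=
      ⟨⟨by linarith [hs.2], by linarith [hs.1, ht.2]⟩, ⟨hs.1, hs.2.trans_le ht.2⟩⟩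
    refine ((hasFDerivAt_uncurry_of_hasDerivAt_of_continuousOn (isOpen_Ioo.prod isOpen_Ioo)
      hwt hwx cwt cwx hp).comp_hasDerivAt (f := fun s => (t - s, s)) s
      (((hasDerivAt_id s).const_sub t).prodMk (hasDerivAt_id s))).congr_deriv ?_
    simp [heq _ hp]
  obtain ⟨-, -, hslope⟩ := exists_hasDerivAt_eq_slope Φ (fun _ => 0) ht0 hΦc hΦd
  have hΦ : Φ t - Φ 0 = 0 :=
    (div_eq_zero_iff.1 hslope.symm).resolve_right (sub_ne_zero.2 ht0.ne')
  simp only [Φ, sub_self, sub_zero] at hΦ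
  linarith

theorem hasDerivWithinAt_integral_Icc {f : ℝ → ℝ} {a b c t : ℝ} (hf : ContinuousOn f (Icc a b))
    (hc : c ∈ Icc a b) (ht : t ∈ Icc a b) :
    HasDerivWithinAt (fun x => ∫ s in c..x, f s) (f t) (Icc a b) t :=
  have : Fact (t ∈ Icc a b) := ⟨ht⟩
  integral_hasDerivWithinAt_right ((hf.mono (uIcc_subset_Icc hc ht)).intervalIntegrable)
    (hf.stronglyMeasurableAtFilter_nhdsWithin measurableSet_Icc t) (hf t ht)

theorem IsWaveSol.vt_add_vx_boundary_eq_initial {T : ℝ} {v vt vx vtt vtx vxx : ℝ → ℝ → ℝ}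
    (hv : IsWaveSol T v vt vx vtt vtx vxx) (hT : T ≤ 1) {t : ℝ} (ht : t ∈ Icc 0 T) :
    vt t 0 + vx t 0 = vt 0 t + vx 0 t := by
  have hsub : Icc 0 T ×ˢ Icc 0 T ⊆ Icc 0 T ×ˢ Icc (0:ℝ) 1 :=
    prod_mono_right (Icc_subset_Icc_right hT)
  have hsub' : Ioo 0 T ×ˢ Ioo 0 T ⊆ Icc 0 T ×ˢ Icc (0:ℝ) 1 :=
    (Set.prod_mono Ioo_subset_Icc_self Ioo_subset_Icc_self).trans hsub
  refine apply_eq_of_transport_equation (w := fun a b => vt a b + vx a b)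
    (wt := fun a b => vtt a b + vtx a b) (wx := fun a b => vtx a b + vxx a b)
    ((hv.contvt.add hv.contvx).mono hsub)
    (fun p hp => (hv.hvtt _ (hsub' hp).1 _ (hsub' hp).2).add
      (hv.hvxt _ (hsub' hp).1 _ (hsub' hp).2))
    (fun p hp => (hv.hvtx _ (hsub' hp).1 _ (hsub' hp).2).add
      (hv.hvxx _ (hsub' hp).1 _ (hsub' hp).2))
    ((hv.contvtt.add hv.contvtx).mono hsub') ((hv.contvtx.add hv.contvxx).mono hsub')
    (fun p hp => ?_) ht
  simp only [hv.wave _ (hsub' hp).1 _ (hsub' hp).2, add_comm]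

theorem interface_implies_pointmass_coupling_general
    (u ut ux uxx v vt vx vtt vtx vxx : ℝ → ℝ → ℝ) (h : ℝ → ℝ) (v₀ v₀' v₁ : ℝ → ℝ)
    (hu : IsHeatSol 1 u ut ux uxx)
    (hu00 : u 0 0 = 0)
    (hh : ∀ t, h t = ∫ s in (0:ℝ)..t, u s 0)
    (hv : IsWaveSol 1 v vt vx vtt vtx vxx)
    (hdir : ∀ t ∈ Icc (0:ℝ) 1, v t 0 = h t)
    (hv₀ : ∀ x ∈ Icc (0:ℝ) 1, v 0 x = v₀ x)
    (hv₁ : ∀ x ∈ Icc (0:ℝ) 1, vt 0 x = v₁ x)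
    (hv₀d : ∀ x ∈ Icc (0:ℝ) 1, HasDerivAt v₀ (v₀' x) x)
    (hint : ∀ t ∈ Icc (0:ℝ) 1, ux t 0 + u t 0 + ut t 0 = v₀' t + v₁ t) :
    h 0 = 0 ∧ u 0 0 = 0 ∧
    (∀ t ∈ Icc (0:ℝ) 1, HasDerivWithinAt h (u t 0) (Icc 0 1) t) ∧
    (∀ t ∈ Icc (0:ℝ) 1, HasDerivWithinAt (fun s => u s 0) (ut t 0) (Icc 0 1) t) ∧
    ContinuousOn (fun t => ut t 0) (Icc 0 1) ∧
    (∀ t ∈ Icc (0:ℝ) 1, u t 0 = vt t 0 ∧ ut t 0 = vx t 0 - ux t 0) := by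
  have hx0 : (0:ℝ) ∈ Icc (-1:ℝ) 0 := by norm_num
  have ht0 : (0:ℝ) ∈ Icc (0:ℝ) 1 := by norm_num
  have hdh : ∀ t ∈ Icc (0:ℝ) 1, HasDerivWithinAt h (u t 0) (Icc 0 1) t := fun t ht => by
    rw [funext hh]
    exact hasDerivWithinAt_integral_Icc (hu.contu.uncurry_right 0 hx0) ht0 ht
  have hvt : ∀ t ∈ Icc (0:ℝ) 1, vt t 0 = u t 0 := fun t ht =>
    (uniqueDiffOn_Icc zero_lt_one t ht).eq_deriv _ (hv.hvt t ht 0 ht0).hasDerivWithinAt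
      ((hdh t ht).congr hdir (hdir t ht))
  have hvx : ∀ t ∈ Icc (0:ℝ) 1, vx 0 t = v₀' t := fun t ht =>
    (uniqueDiffOn_Icc zero_lt_one t ht).eq_deriv _ (hv.hvx 0 ht0 t ht).hasDerivWithinAt
      ((hv₀d t ht).hasDerivWithinAt.congr hv₀ (hv₀ t ht))
  refine ⟨by simp [hh], hu00, hdh, fun t ht => (hu.hut t ht 0 hx0).hasDerivWithinAt,
    hu.contut.uncurry_right 0 hx0, fun t ht => ⟨(hvt t ht).symm, ?_⟩⟩
  linarith [hv.vt_add_vx_boundary_eq_initial le_rfl ht, hvt t ht, hvx t ht, hv₁ t ht, hint t ht]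

/-- Let `u` be a classical solution of the heat equation on
`[0,1] × [−1,0]` with `u(t,−1) = 0` and `u(0,0) = 0`, set `h(t) = ∫_0^t u(s,0) ds`,
and let `v` be a classical solution of the wave equation on `[0,1] × [0,1]` with
`v(t,1) = 0`, `v(t,0) = h(t)`, and initial data `v₀, v₁` (`v₀` continuously
differentiable with derivative `v₀'`). If the interface equation with inertia
`∂_x u(t,0) + u(t,0) + ∂_t u(t,0) = v₀'(t) + v₁(t)` holds on `[0,1]`, then `h` is
twice continuously differentiable with `h' = u(·,0)`, `h'' = ∂_t u(·,0)` (the latter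
continuous), `h(0) = h'(0) = 0`, and the point-mass coupling conditions of Problem 2
hold: `u(t,0) = h'(t) = ∂_t v(t,0)` and `h''(t) = ∂_x v(t,0) − ∂_x u(t,0)`. -/
theorem interface_implies_pointmass_coupling
    (u ut ux uxx v vt vx vtt vtx vxx : ℝ → ℝ → ℝ) (h : ℝ → ℝ) (v₀ v₀' v₁ : ℝ → ℝ)
    (hu : IsHeatSol 1 u ut ux uxx)
    (hbu : ∀ t ∈ Icc (0:ℝ) 1, u t (-1) = 0)
    (hu00 : u 0 0 = 0)
    (hh : ∀ t, h t = ∫ s in (0:ℝ)..t, u s 0)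
    (hv : IsWaveSol 1 v vt vx vtt vtx vxx)
    (hbv : ∀ t ∈ Icc (0:ℝ) 1, v t 1 = 0)
    (hdir : ∀ t ∈ Icc (0:ℝ) 1, v t 0 = h t)
    (hv₀ : ∀ x ∈ Icc (0:ℝ) 1, v 0 x = v₀ x)
    (hv₁ : ∀ x ∈ Icc (0:ℝ) 1, vt 0 x = v₁ x)
    (hv₀d : ∀ x ∈ Icc (0:ℝ) 1, HasDerivAt v₀ (v₀' x) x)
    (hv₀c : ContinuousOn v₀' (Icc 0 1))
    (hint : ∀ t ∈ Icc (0:ℝ) 1, ux t 0 + u t 0 + ut t 0 = v₀' t + v₁ t) :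
    h 0 = 0 ∧ u 0 0 = 0 ∧
    (∀ t ∈ Icc (0:ℝ) 1, HasDerivWithinAt h (u t 0) (Icc 0 1) t) ∧
    (∀ t ∈ Icc (0:ℝ) 1, HasDerivWithinAt (fun s => u s 0) (ut t 0) (Icc 0 1) t) ∧
    ContinuousOn (fun t => ut t 0) (Icc 0 1) ∧
    (∀ t ∈ Icc (0:ℝ) 1, u t 0 = vt t 0 ∧ ut t 0 = vx t 0 - ux t 0) :=
  interface_implies_pointmass_coupling_general u ut ux uxx v vt vx vtt vtx vxx h v₀ v₀' v₁ hu hu00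
    hh hv hdir hv₀ hv₁ hv₀d hint
end

section
/- Let u be a classical solution of the heat equation on [0,T]×[−1,0] satisfying u(0,x) = 0 for all x ∈ [−1,0], u(t,−1) = 0 for all t ∈ [0,T], and the boundary relation u(t,0) = −∂_x u(t,0) for all t ∈ [0,T]. Then u is identically zero on [0,T]×[−1,0]. (This is the classical-solution form of the statement that the kernel of I + L₀ is trivial, where L₀ is the Neumann-to-Dirichlet operator of the heat equation with zero initial data.) -/
open Set Real MeasureTheory intervalIntegral

/- Energy argument: `E(t) = ∫ u(t,x)² dx` starts at `0`, and integrating by parts in `x`,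
`E'(t) = 2 ∫ u ∂ₓ²u = 2 [u ∂ₓu]₋₁⁰ - 2 ∫ (∂ₓu)² = -2 (∂ₓu(t,0))² - 2 ∫ (∂ₓu)² ≤ 0`
thanks to the two boundary conditions. Hence `E ≡ 0` and `u ≡ 0`. To avoid differentiating
under the integral sign, `E(t)` is written as `∫ₓ ∫₀ᵗ 2 u ∂ₜu` and the order of integration
is swapped. -/

section Slices

variable {α β γ : Type*} [TopologicalSpace α] [TopologicalSpace β] [TopologicalSpace γ]
  {f : α → β → γ} {s : Set α} {t : Set β}

lemma ContinuousOn.uncurry_slice_left (hf : ContinuousOn (fun p : α × β => f p.1 p.2) (s ×ˢ t))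
    {a : α} (ha : a ∈ s) : ContinuousOn (f a) t :=
  hf.comp (Continuous.prodMk_right a).continuousOn fun _ hb => ⟨ha, hb⟩

lemma ContinuousOn.uncurry_slice_right (hf : ContinuousOn (fun p : α × β => f p.1 p.2) (s ×ˢ t))
    {b : β} (hb : b ∈ t) : ContinuousOn (fun a => f a b) s :=
  hf.comp (Continuous.prodMk_left b).continuousOn fun _ ha => ⟨ha, hb⟩

end Slices

lemma sq_eq_integral_of_hasDerivAt {f f' : ℝ → ℝ} {a b : ℝ} (hab : a ≤ b)
    (hf : ∀ s ∈ Icc a b, HasDerivAt f (f' s) s) (hf' : ContinuousOn f' (Icc a b)) (ha : f a = 0) :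
    f b ^ 2 = ∫ s in a..b, 2 * f s * f' s := by
  have hcont : ContinuousOn f (Icc a b) := fun s hs => (hf s hs).continuousAt.continuousWithinAt
  rw [integral_eq_sub_of_hasDerivAt (f := fun s => f s ^ 2), ha]
  · ring
  · intro s hs
    rw [uIcc_of_le hab] at hs
    exact ((hf s hs).fun_pow 2).congr_deriv (by push_cast; ring)
  · exact ((continuousOn_const.mul hcont).mul hf').intervalIntegrable_of_Icc hab

lemma integral_mul_deriv_deriv_le {f f' f'' : ℝ → ℝ} {a b : ℝ} (hab : a ≤ b)
    (hf : ∀ x ∈ Icc a b, HasDerivAt f (f' x) x) (hf' : ∀ x ∈ Icc a b, HasDerivAt f' (f'' x) x)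
    (hcf' : ContinuousOn f' (Icc a b)) (hcf'' : ContinuousOn f'' (Icc a b)) :
    ∫ x in a..b, f x * f'' x ≤ f b * f' b - f a * f' a := by
  rw [← uIcc_of_le hab] at hf hf'
  rw [integral_mul_deriv_eq_deriv_mul hf hf' (hcf'.intervalIntegrable_of_Icc hab)
    (hcf''.intervalIntegrable_of_Icc hab)]
  have : 0 ≤ ∫ x in a..b, f' x * f' x := integral_nonneg hab fun x _ => mul_self_nonneg _
  linarith

lemma intervalIntegral_integral_swap_of_continuousOn {F : ℝ → ℝ → ℝ} {a b c d : ℝ}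
    (hab : a ≤ b) (hcd : c ≤ d)
    (hF : ContinuousOn (fun p : ℝ × ℝ => F p.1 p.2) (Icc a b ×ˢ Icc c d)) :
    ∫ x in a..b, ∫ y in c..d, F x y = ∫ y in c..d, ∫ x in a..b, F x y := by
  simp only [integral_of_le hab, integral_of_le hcd]
  apply integral_integral_swap
  rw [Measure.prod_restrict, ← Measure.volume_eq_prod]
  exact (hF.integrableOn_compact (isCompact_Icc.prod isCompact_Icc)).mono_set
    (prod_mono Ioc_subset_Icc_self Ioc_subset_Icc_self)

lemma eqOn_zero_of_integral_sq_nonpos {f : ℝ → ℝ} {a b : ℝ} (hab : a < b)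
    (hf : ContinuousOn f (Icc a b)) (h : ∫ x in a..b, f x ^ 2 ≤ 0) : EqOn f 0 (Icc a b) := by
  have hsq : ContinuousOn (fun x => f x ^ 2) (Icc a b) := hf.pow 2
  have hzero : ∫ x in a..b, f x ^ 2 = 0 :=
    le_antisymm h (integral_nonneg hab.le fun x _ => sq_nonneg _)
  have hae : (fun x => f x ^ 2) =ᵐ[volume.restrict (Icc a b)] 0 := by
    rw [← Measure.restrict_congr_set Ioc_ae_eq_Icc]
    exact (integral_eq_zero_iff_of_le_of_nonneg_ae hab.le
      (Filter.Eventually.of_forall fun x => sq_nonneg (f x))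
      (hsq.intervalIntegrable_of_Icc hab.le)).mp hzero
  intro x hx
  simpa using Measure.eqOn_Icc_of_ae_eq volume hab.ne hae hsq continuousOn_const hx

namespace IsHeatSol

variable {T : ℝ} {u ut ux uxx : ℝ → ℝ → ℝ}

lemma integral_mul_timeDeriv_le (hu : IsHeatSol T u ut ux uxx) {s : ℝ} (hs : s ∈ Icc 0 T) :
    ∫ x in (-1:ℝ)..0, u s x * ut s x ≤ u s 0 * ux s 0 - u s (-1) * ux s (-1) := by
  have hheat : ∫ x in (-1:ℝ)..0, u s x * ut s x = ∫ x in (-1:ℝ)..0, u s x * uxx s x :=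
    integral_congr fun x hx => by
      rw [uIcc_of_le (by norm_num)] at hx
      simp only [hu.heat s hs x hx]
  rw [hheat]
  exact integral_mul_deriv_deriv_le (by norm_num) (hu.hux s hs) (hu.huxx s hs)
    (hu.contux.uncurry_slice_left hs) (hu.contuxx.uncurry_slice_left hs)

end IsHeatSol

theorem kernel_I_plus_L0_trivial_general (T : ℝ) (u ut ux uxx : ℝ → ℝ → ℝ)
    (hu : IsHeatSol T u ut ux uxx)
    (hinit : ∀ x ∈ Icc (-1:ℝ) 0, u 0 x = 0)
    (hbu : ∀ t ∈ Icc (0:ℝ) T, u t (-1) = 0)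
    (hbd : ∀ t ∈ Icc (0:ℝ) T, u t 0 = -ux t 0) :
    ∀ t ∈ Icc (0:ℝ) T, ∀ x ∈ Icc (-1:ℝ) 0, u t x = 0 := by
  intro t ht
  have htT : Icc 0 t ⊆ Icc 0 T := Icc_subset_Icc le_rfl ht.2
  have hdissip : ∀ s ∈ Icc 0 t, ∫ x in (-1:ℝ)..0, 2 * u s x * ut s x ≤ 0 := fun s hs => by
    have h := hu.integral_mul_timeDeriv_le (htT hs)
    rw [hbu s (htT hs), hbd s (htT hs)] at h
    simp only [mul_assoc, intervalIntegral.integral_const_mul]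
    nlinarith [sq_nonneg (ux s 0)]
  have henergy : ∫ x in (-1:ℝ)..0, u t x ^ 2 ≤ 0 := calc
    ∫ x in (-1:ℝ)..0, u t x ^ 2 = ∫ x in (-1:ℝ)..0, ∫ s in (0:ℝ)..t, 2 * u s x * ut s x :=
        integral_congr fun x hx => by
          rw [uIcc_of_le (by norm_num)] at hx
          exact sq_eq_integral_of_hasDerivAt ht.1 (fun s hs => hu.hut s (htT hs) x hx)
            ((hu.contut.uncurry_slice_right hx).mono htT) (hinit x hx)
    _ = ∫ s in (0:ℝ)..t, ∫ x in (-1:ℝ)..0, 2 * u s x * ut s x := by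
        have hmaps : MapsTo Prod.swap (Icc (-1 : ℝ) 0 ×ˢ Icc 0 t) (Icc 0 T ×ˢ Icc (-1) 0) :=
          fun p hp => ⟨htT hp.2, hp.1⟩
        exact intervalIntegral_integral_swap_of_continuousOn (by norm_num) ht.1
          ((continuousOn_const.mul (hu.contu.comp continuous_swap.continuousOn hmaps)).mul
            (hu.contut.comp continuous_swap.continuousOn hmaps))
    _ ≤ 0 := by simpa using integral_nonneg ht.1 fun s hs => neg_nonneg.2 (hdissip s hs)
  exact eqOn_zero_of_integral_sq_nonpos (by norm_num) (hu.contu.uncurry_slice_left ht) henergy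

/-- A classical solution of the heat equation on `[0,T] × [−1,0]`
with zero initial data, `u(t,−1) = 0`, and boundary relation `u(t,0) = −∂_x u(t,0)`
vanishes identically. (Classical-solution form of `ker (I + L₀) = {0}` for the
Neumann-to-Dirichlet operator `L₀` with zero initial data.) -/
theorem kernel_I_plus_L0_trivial (T : ℝ) (hT : 0 ≤ T) (u ut ux uxx : ℝ → ℝ → ℝ)
    (hu : IsHeatSol T u ut ux uxx)
    (hinit : ∀ x ∈ Icc (-1:ℝ) 0, u 0 x = 0)
    (hbu : ∀ t ∈ Icc (0:ℝ) T, u t (-1) = 0)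
    (hbd : ∀ t ∈ Icc (0:ℝ) T, u t 0 = -ux t 0) :
    ∀ t ∈ Icc (0:ℝ) T, ∀ x ∈ Icc (-1:ℝ) 0, u t x = 0 :=
  kernel_I_plus_L0_trivial_general T u ut ux uxx hu hinit hbu hbd
end

section
/- Let u be a classical solution of the heat equation on [0,T]×[−1,0] satisfying u(0,x) = 0 for all x ∈ [−1,0], u(t,−1) = 0 for all t ∈ [0,T], and the nonlocal boundary relation u(t,0) = −∫_0^t e^{s−t} ∂_x u(s,0) ds for all t ∈ [0,T]. Then u is identically zero on [0,T]×[−1,0]. (This is the classical-solution form of the statement that in the point-mass coupling the kernel of I + W is trivial, where (Wg)(t) = L₀⁻¹(∫_0^t e^{s−t} g(s) ds) and L₀ is the Neumann-to-Dirichlet operator of the heat equation with zero initial data.) -/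
/-! The energy `E(t) = ∫_{-1}^0 u(t,x)² dx + u(t,0)²` is non-increasing. Integrating by parts
with `u(t,-1) = 0`, the bulk term changes at rate `2 u(t,0) ∂ₓu(t,0) - 2 ∫ (∂ₓu)²`, while the
boundary relation says that `b(t) = u(t,0)` solves `b' = -b - ∂ₓu(t,0)`, so `(b²)' = -2 b² -
2 b ∂ₓu(t,0)`. The flux terms cancel and `E' = -2 u(t,0)² - 2 ∫ (∂ₓu)² ≤ 0`. As `E(0) = 0`,
`E` vanishes on `[0,T]`, hence so does `u`. -/

open Set Real MeasureTheory intervalIntegral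

open Filter Topology
open scoped Interval

section ParametricIntervalIntegral

variable {X E : Type*} [TopologicalSpace X] [NormedAddCommGroup E] [NormedSpace ℝ E] {a b : ℝ}

theorem continuousOn_intervalIntegral_of_continuousOn_prod [FirstCountableTopology X]
    {F : X → ℝ → E} {s : Set X} (hs : IsCompact s) (hF : ContinuousOn F.uncurry (s ×ˢ [[a, b]])) :
    ContinuousOn (fun x => ∫ t in a..b, F x t) s := by
  obtain ⟨C, hC⟩ := (hs.prod isCompact_uIcc).exists_bound_of_continuousOn hF
  intro x₀ hx₀
  refine continuousWithinAt_of_dominated_interval (bound := fun _ => C) ?_ ?_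
    intervalIntegrable_const ?_
  · filter_upwards [self_mem_nhdsWithin] with x hx
    exact ((hF.uncurry_left x hx).intervalIntegrable).def'.aestronglyMeasurable
  · filter_upwards [self_mem_nhdsWithin] with x hx
    exact Eventually.of_forall fun t ht => hC (x, t) ⟨hx, uIoc_subset_uIcc ht⟩
  · exact Eventually.of_forall fun t ht => hF.uncurry_right t (uIoc_subset_uIcc ht) x₀ hx₀

theorem hasDerivAt_intervalIntegral_of_continuousOn_prod {F F' : ℝ → ℝ → E} {s : Set ℝ}
    {x₀ : ℝ} (hs : IsCompact s) (hx₀ : s ∈ 𝓝 x₀) (hF : ContinuousOn F.uncurry (s ×ˢ [[a, b]]))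
    (hF' : ContinuousOn F'.uncurry (s ×ˢ [[a, b]]))
    (hderiv : ∀ x ∈ s, ∀ t ∈ [[a, b]], HasDerivAt (F · t) (F' x t) x) :
    HasDerivAt (fun x => ∫ t in a..b, F x t) (∫ t in a..b, F' x₀ t) x₀ := by
  obtain ⟨C, hC⟩ := (hs.prod isCompact_uIcc).exists_bound_of_continuousOn hF'
  have hx₀s : x₀ ∈ s := mem_of_mem_nhds hx₀
  refine (hasDerivAt_integral_of_dominated_loc_of_deriv_le (bound := fun _ => C) hx₀ ?_
    (hF.uncurry_left x₀ hx₀s).intervalIntegrable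
    (hF'.uncurry_left x₀ hx₀s).intervalIntegrable.def'.aestronglyMeasurable ?_
    intervalIntegrable_const ?_).2
  · filter_upwards [hx₀] with x hx
    exact (hF.uncurry_left x hx).intervalIntegrable.def'.aestronglyMeasurable
  · exact Eventually.of_forall fun t ht x hx => hC (x, t) ⟨hx, uIoc_subset_uIcc ht⟩
  · exact Eventually.of_forall fun t ht x hx => hderiv x hx t (uIoc_subset_uIcc ht)

end ParametricIntervalIntegral

theorem eqOn_zero_of_intervalIntegral_eq_zero {f : ℝ → ℝ} {a b : ℝ} (hab : a < b)
    (hf : ContinuousOn f (Icc a b)) (hf₀ : ∀ x ∈ Icc a b, 0 ≤ f x) (h : ∫ x in a..b, f x = 0) :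
    EqOn f 0 (Icc a b) := by
  have hae : f =ᵐ[volume.restrict (Ioc a b)] 0 :=
    (integral_eq_zero_iff_of_le_of_nonneg_ae hab.le
      ((ae_restrict_iff' measurableSet_Ioc).2 (Eventually.of_forall fun x hx =>
        hf₀ x (Ioc_subset_Icc_self hx)))
      (hf.intervalIntegrable_of_Icc hab.le)).1 h
  rw [restrict_Ioc_eq_restrict_Icc] at hae
  refine Measure.eqOn_of_ae_eq hae hf continuousOn_const ?_
  rw [interior_Icc, closure_Ioo hab.ne]

theorem hasDerivAt_integral_exp_sub_mul {g : ℝ → ℝ} {a b t : ℝ} (hg : ContinuousOn g (Icc a b))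
    (ht : t ∈ Ioo a b) :
    HasDerivAt (fun τ => ∫ σ in a..τ, exp (σ - τ) * g σ)
      (g t - ∫ σ in a..t, exp (σ - t) * g σ) t := by
  have hfactor : ∀ τ, ∫ σ in a..τ, exp (σ - τ) * g σ = exp (-τ) * ∫ σ in a..τ, exp σ * g σ := by
    intro τ
    rw [← intervalIntegral.integral_const_mul]
    congr 1 with σ
    rw [sub_eq_add_neg, exp_add]
    ring
  have hcont : ContinuousOn (fun σ => exp σ * g σ) (Icc a b) :=
    continuous_exp.continuousOn.mul hg
  have hprim : HasDerivAt (fun τ => ∫ σ in a..τ, exp σ * g σ) (exp t * g t) t :=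
    integral_hasDerivAt_right
      (hcont.mono (uIcc_subset_Icc (left_mem_Icc.2 (ht.1.trans ht.2).le)
        (Ioo_subset_Icc_self ht))).intervalIntegrable
      ((hcont.mono Ioo_subset_Icc_self).stronglyMeasurableAtFilter isOpen_Ioo t ht)
      (hcont.continuousAt (Icc_mem_nhds ht.1 ht.2))
  simp only [hfactor]
  refine ((hasDerivAt_neg t).exp.mul hprim).congr_deriv ?_
  rw [← mul_assoc, ← exp_add, neg_add_cancel, exp_zero]
  ring

theorem uIcc_neg_one_zero : [[(-1 : ℝ), 0]] = Icc (-1) 0 :=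
  uIcc_of_le (by norm_num)

noncomputable def heatEnergy (u : ℝ → ℝ → ℝ) (t : ℝ) : ℝ :=
  (∫ x in (-1 : ℝ)..0, u t x ^ 2) + u t 0 ^ 2

namespace IsHeatSol

variable {T : ℝ} {u ut ux uxx : ℝ → ℝ → ℝ} {t : ℝ}

theorem hasDerivAt_integral_sq (hu : IsHeatSol T u ut ux uxx) (ht : t ∈ Ioo 0 T) :
    HasDerivAt (fun τ => ∫ x in (-1 : ℝ)..0, u τ x ^ 2)
      (∫ x in (-1 : ℝ)..0, 2 * u t x * ut t x) t := by
  apply hasDerivAt_intervalIntegral_of_continuousOn_prod isCompact_Icc (Icc_mem_nhds ht.1 ht.2)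
  · rw [uIcc_neg_one_zero]
    exact hu.contu.pow 2
  · rw [uIcc_neg_one_zero]
    exact (continuousOn_const.mul hu.contu).mul hu.contut
  · intro τ hτ x hx
    rw [uIcc_neg_one_zero] at hx
    exact ((hu.hut τ hτ x hx).pow 2).congr_deriv (by ring)

theorem integral_two_mul_mul_ut (hu : IsHeatSol T u ut ux uxx) (ht : t ∈ Icc 0 T)
    (hbu : u t (-1) = 0) :
    ∫ x in (-1 : ℝ)..0, 2 * u t x * ut t x
      = 2 * (u t 0 * ux t 0) - 2 * ∫ x in (-1 : ℝ)..0, ux t x ^ 2 := by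
  have hsec : ∀ v : ℝ → ℝ → ℝ, ContinuousOn (fun p : ℝ × ℝ => v p.1 p.2) (Icc 0 T ×ˢ Icc (-1) 0) →
      IntervalIntegrable (v t) volume (-1) 0 := fun v hv =>
    (hv.uncurry_left (f := v) t ht).intervalIntegrable_of_Icc (by norm_num)
  have hibp := integral_mul_deriv_eq_deriv_mul
    (fun x hx => hu.hux t ht x (uIcc_neg_one_zero ▸ hx))
    (fun x hx => hu.huxx t ht x (uIcc_neg_one_zero ▸ hx)) (hsec ux hu.contux) (hsec uxx hu.contuxx)
  calc ∫ x in (-1 : ℝ)..0, 2 * u t x * ut t x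
      = 2 * ∫ x in (-1 : ℝ)..0, u t x * uxx t x := by
        rw [← intervalIntegral.integral_const_mul]
        refine integral_congr fun x hx => ?_
        simp only [hu.heat t ht x (uIcc_neg_one_zero ▸ hx), mul_assoc]
    _ = 2 * (u t 0 * ux t 0) - 2 * ∫ x in (-1 : ℝ)..0, ux t x ^ 2 := by
        simp only [hibp, hbu, zero_mul, sub_zero, sq]
        ring

theorem hasDerivAt_boundaryValue (hu : IsHeatSol T u ut ux uxx)
    (hbd : ∀ t ∈ Icc (0:ℝ) T, u t 0 = -∫ s in (0:ℝ)..t, Real.exp (s - t) * ux s 0)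
    (ht : t ∈ Ioo 0 T) :
    HasDerivAt (fun τ => u τ 0) (-u t 0 - ux t 0) t := by
  have hflux : ContinuousOn (fun s => ux s 0) (Icc 0 T) :=
    hu.contux.uncurry_right (f := ux) 0 (right_mem_Icc.2 (by norm_num))
  refine ((hasDerivAt_integral_exp_sub_mul hflux ht).neg.congr_of_eventuallyEq ?_).congr_deriv ?_
  · filter_upwards [Icc_mem_nhds ht.1 ht.2] with τ hτ using hbd τ hτ
  · rw [hbd t (Ioo_subset_Icc_self ht)]
    ring

theorem hasDerivAt_heatEnergy (hu : IsHeatSol T u ut ux uxx)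
    (hbu : ∀ t ∈ Icc (0:ℝ) T, u t (-1) = 0)
    (hbd : ∀ t ∈ Icc (0:ℝ) T, u t 0 = -∫ s in (0:ℝ)..t, Real.exp (s - t) * ux s 0)
    (ht : t ∈ Ioo 0 T) :
    HasDerivAt (heatEnergy u) (-2 * u t 0 ^ 2 - 2 * ∫ x in (-1 : ℝ)..0, ux t x ^ 2) t := by
  have hbulk := hu.hasDerivAt_integral_sq ht
  rw [hu.integral_two_mul_mul_ut (Ioo_subset_Icc_self ht) (hbu t (Ioo_subset_Icc_self ht))]
    at hbulk
  exact (hbulk.add ((hu.hasDerivAt_boundaryValue hbd ht).pow 2)).congr_deriv (by ring)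

theorem continuousOn_heatEnergy (hu : IsHeatSol T u ut ux uxx) :
    ContinuousOn (heatEnergy u) (Icc 0 T) := by
  have hbulk : ContinuousOn (fun τ => ∫ x in (-1 : ℝ)..0, u τ x ^ 2) (Icc 0 T) := by
    refine continuousOn_intervalIntegral_of_continuousOn_prod isCompact_Icc ?_
    rw [uIcc_neg_one_zero]
    exact hu.contu.pow 2
  exact hbulk.add ((hu.contu.uncurry_right (f := u) 0 (right_mem_Icc.2 (by norm_num))).pow 2)

theorem antitoneOn_heatEnergy (hu : IsHeatSol T u ut ux uxx)
    (hbu : ∀ t ∈ Icc (0:ℝ) T, u t (-1) = 0)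
    (hbd : ∀ t ∈ Icc (0:ℝ) T, u t 0 = -∫ s in (0:ℝ)..t, Real.exp (s - t) * ux s 0) :
    AntitoneOn (heatEnergy u) (Icc 0 T) := by
  refine antitoneOn_of_hasDerivWithinAt_nonpos (convex_Icc 0 T) hu.continuousOn_heatEnergy
    (f' := fun t => -2 * u t 0 ^ 2 - 2 * ∫ x in (-1 : ℝ)..0, ux t x ^ 2)
    (fun t ht => ?_) (fun t ht => ?_)
  · rw [interior_Icc] at ht ⊢
    exact (hu.hasDerivAt_heatEnergy hbu hbd ht).hasDerivWithinAt
  · have hdiss : 0 ≤ ∫ x in (-1 : ℝ)..0, ux t x ^ 2 :=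
      integral_nonneg (by norm_num) fun x _ => sq_nonneg _
    linarith [sq_nonneg (u t 0)]

end IsHeatSol

theorem kernel_I_plus_W_trivial_general (T : ℝ) (u ut ux uxx : ℝ → ℝ → ℝ)
    (hu : IsHeatSol T u ut ux uxx)
    (hinit : ∀ x ∈ Icc (-1:ℝ) 0, u 0 x = 0)
    (hbu : ∀ t ∈ Icc (0:ℝ) T, u t (-1) = 0)
    (hbd : ∀ t ∈ Icc (0:ℝ) T, u t 0 = -∫ s in (0:ℝ)..t, Real.exp (s - t) * ux s 0) :
    ∀ t ∈ Icc (0:ℝ) T, ∀ x ∈ Icc (-1:ℝ) 0, u t x = 0 := by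
  intro t ht x hx
  have hE0 : heatEnergy u 0 = 0 := by
    have hsq : EqOn (fun y => u 0 y ^ 2) 0 [[(-1 : ℝ), 0]] := fun y hy => by
      simp [hinit y (uIcc_neg_one_zero ▸ hy)]
    simp [heatEnergy, integral_congr hsq, hinit 0 ⟨by norm_num, le_rfl⟩]
  have hEt : heatEnergy u t ≤ 0 :=
    hE0 ▸ hu.antitoneOn_heatEnergy hbu hbd ⟨le_rfl, ht.1.trans ht.2⟩ ht ht.1
  have hbulk : ∫ y in (-1 : ℝ)..0, u t y ^ 2 = 0 := by
    have := integral_nonneg (μ := volume) (by norm_num : (-1 : ℝ) ≤ 0)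
      fun y _ => sq_nonneg (u t y)
    unfold heatEnergy at hEt
    linarith [sq_nonneg (u t 0)]
  simpa using eqOn_zero_of_intervalIntegral_eq_zero (by norm_num)
    ((hu.contu.uncurry_left (f := u) t ht).pow 2) (fun _ _ => sq_nonneg _) hbulk hx

/-- A classical solution of the heat equation on `[0,T] × [−1,0]`
with zero initial data, `u(t,−1) = 0`, and the nonlocal boundary relation
`u(t,0) = −∫_0^t e^{s−t} ∂_x u(s,0) ds` vanishes identically. (Classical-solution
form of `ker (I + W) = {0}` in the point-mass coupling, where
`(Wg)(t) = L₀⁻¹(∫_0^t e^{s−t} g(s) ds)`.) -/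
theorem kernel_I_plus_W_trivial (T : ℝ) (hT : 0 ≤ T) (u ut ux uxx : ℝ → ℝ → ℝ)
    (hu : IsHeatSol T u ut ux uxx)
    (hinit : ∀ x ∈ Icc (-1:ℝ) 0, u 0 x = 0)
    (hbu : ∀ t ∈ Icc (0:ℝ) T, u t (-1) = 0)
    (hbd : ∀ t ∈ Icc (0:ℝ) T, u t 0 = -∫ s in (0:ℝ)..t, Real.exp (s - t) * ux s 0) :
    ∀ t ∈ Icc (0:ℝ) T, ∀ x ∈ Icc (-1:ℝ) 0, u t x = 0 :=
  kernel_I_plus_W_trivial_general T u ut ux uxx hu hinit hbu hbd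
end

section
/- Let (u,v) be a classical solution of Problem 1 (the heat–wave system) on [0,T] with initial data u₀, v₀, v₁, where v₀ is continuously differentiable. Then for every t ∈ [0,T] the coupled energy identity (1/2)∫_{−1}^{0} u(t,x)² dx + (1/2)∫_0^1 ((∂_t v(t,x))² + (∂_x v(t,x))²) dx + ∫_0^t ∫_{−1}^{0} (∂_x u(s,x))² dx ds = (1/2)∫_{−1}^{0} u₀(x)² dx + (1/2)∫_0^1 (v₁(x)² + v₀′(x)²) dx holds; in particular the boundary fluxes of the heat and wave parts cancel through the coupling conditions. -/
/-!
Multiplying the heat equation by `u` and integrating by parts in `x`, the heat energy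
`½∫u²` changes at the rate `u ∂ₓu |_{x=0} − ∫(∂ₓu)²` (the term at `x = −1` vanishes);
multiplying the wave equation by `∂ₜv`, the wave energy `½∫((∂ₜv)² + (∂ₓv)²)` changes at
the rate `−∂ₜv ∂ₓv |_{x=0}` (the term at `x = 1` vanishes because `v(·,1) ≡ 0`). The coupling
conditions make the two interface fluxes cancel. The time integration is carried out
pointwise in `x` by the fundamental theorem of calculus and then swapped by Fubini.
-/

open Set Real MeasureTheory intervalIntegral

open Function

section RectangleIntegrals

variable {F F' : ℝ → ℝ → ℝ} {a b c d : ℝ}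

theorem ContinuousOn.intervalIntegrable_intervalIntegral (hab : a ≤ b) (hcd : c ≤ d)
    (hF : ContinuousOn (uncurry F) (Icc a b ×ˢ Icc c d)) :
    IntervalIntegrable (fun s => ∫ x in c..d, F s x) volume a b := by
  have hint : Integrable (uncurry F)
      ((volume.restrict (Icc a b)).prod (volume.restrict (Icc c d))) := by
    rw [Measure.prod_restrict, ← Measure.volume_eq_prod]
    exact hF.integrableOn_compact (isCompact_Icc.prod isCompact_Icc)
  rw [intervalIntegrable_iff_integrableOn_Icc_of_le hab, IntegrableOn]
  simpa only [integral_of_le hcd, integral_Icc_eq_integral_Ioc, uncurry_apply_pair]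
    using hint.integral_prod_left

theorem ContinuousOn.intervalIntegral_swap (hab : a ≤ b) (hcd : c ≤ d)
    (hF : ContinuousOn (uncurry F) (Icc a b ×ˢ Icc c d)) :
    ∫ s in a..b, ∫ x in c..d, F s x = ∫ x in c..d, ∫ s in a..b, F s x :=
  intervalIntegral_intervalIntegral_swap <|
    (hF.integrableOn_compact (isCompact_Icc.prod isCompact_Icc)).mono_set <|
      prod_mono (uIoc_subset_uIcc.trans (uIcc_of_le hab).subset)
        (uIoc_subset_uIcc.trans (uIcc_of_le hcd).subset)

theorem integral_sub_integral_eq_integral_integral_of_hasDerivAt (hab : a ≤ b) (hcd : c ≤ d)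
    (hF : ∀ s ∈ Icc a b, ∀ x ∈ Icc c d, HasDerivAt (F · x) (F' s x) s)
    (hF' : ContinuousOn (uncurry F') (Icc a b ×ˢ Icc c d))
    (ha : IntervalIntegrable (F a) volume c d) (hb : IntervalIntegrable (F b) volume c d) :
    (∫ x in c..d, F b x) - ∫ x in c..d, F a x = ∫ s in a..b, ∫ x in c..d, F' s x := by
  rw [hF'.intervalIntegral_swap hab hcd, ← integral_sub hb ha]
  refine integral_congr fun x hx => ?_
  rw [uIcc_of_le hcd] at hx
  refine (integral_eq_sub_of_hasDerivAt (fun s hs => hF s ?_ x hx) ?_).symm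
  · rwa [uIcc_of_le hab] at hs
  · exact (hF'.uncurry_right x hx).intervalIntegrable_of_Icc hab

end RectangleIntegrals

theorem HasDerivAt.eq_of_eqOn_Icc {f g : ℝ → ℝ} {f' g' a b x : ℝ} (hab : a < b)
    (hx : x ∈ Icc a b) (hfg : EqOn f g (Icc a b)) (hf : HasDerivAt f f' x)
    (hg : HasDerivAt g g' x) : f' = g' :=
  (uniqueDiffOn_Icc hab x hx).eq_deriv _
    (hf.hasDerivWithinAt.congr_of_mem (fun _ hy => (hfg hy).symm) hx) hg.hasDerivWithinAt

namespace IsHeatSol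

variable {T : ℝ} {u ut ux uxx : ℝ → ℝ → ℝ}

theorem integral_mul_deriv_time (h : IsHeatSol T u ut ux uxx) {s : ℝ} (hs : s ∈ Icc 0 T) :
    ∫ x in (-1:ℝ)..0, u s x * ut s x
      = u s 0 * ux s 0 - u s (-1) * ux s (-1) - ∫ x in (-1:ℝ)..0, ux s x ^ 2 := by
  have hI : uIcc (-1:ℝ) 0 = Icc (-1) 0 := uIcc_of_le (by norm_num)
  have hux : ContinuousOn (uncurry ux) _ := h.contux
  have huxx : ContinuousOn (uncurry uxx) _ := h.contuxx
  calc ∫ x in (-1:ℝ)..0, u s x * ut s x = ∫ x in (-1:ℝ)..0, u s x * uxx s x :=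
        integral_congr fun x hx => by rw [h.heat s hs x (hI ▸ hx)]
    _ = u s 0 * ux s 0 - u s (-1) * ux s (-1) - ∫ x in (-1:ℝ)..0, ux s x * ux s x :=
        integral_mul_deriv_eq_deriv_mul (fun x hx => h.hux s hs x (hI ▸ hx))
          (fun x hx => h.huxx s hs x (hI ▸ hx))
          ((hux.uncurry_left s hs).intervalIntegrable_of_Icc (by norm_num))
          ((huxx.uncurry_left s hs).intervalIntegrable_of_Icc (by norm_num))
    _ = _ := by simp only [sq]

theorem energy_identity (h : IsHeatSol T u ut ux uxx) {t : ℝ} (ht : t ∈ Icc 0 T) :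
    (1 / 2) * (∫ x in (-1:ℝ)..0, u t x ^ 2) - (1 / 2) * (∫ x in (-1:ℝ)..0, u 0 x ^ 2)
      = (∫ s in (0:ℝ)..t, (u s 0 * ux s 0 - u s (-1) * ux s (-1)))
        - ∫ s in (0:ℝ)..t, ∫ x in (-1:ℝ)..0, ux s x ^ 2 := by
  have hsub : Icc 0 t ⊆ Icc 0 T := Icc_subset_Icc_right ht.2
  have hu : ContinuousOn (uncurry u) _ := h.contu
  have hux : ContinuousOn (uncurry ux) _ := h.contux
  have hslice : ∀ s ∈ Icc 0 T, IntervalIntegrable (fun x => u s x ^ 2) volume (-1) 0 :=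
    fun s hs => ((hu.uncurry_left s hs).pow 2).intervalIntegrable_of_Icc (by norm_num)
  have hflux : IntervalIntegrable (fun s => u s 0 * ux s 0 - u s (-1) * ux s (-1)) volume 0 t :=
    (((hu.uncurry_right 0 (by norm_num)).mul (hux.uncurry_right 0 (by norm_num))).sub
      ((hu.uncurry_right (-1) (by norm_num)).mul (hux.uncurry_right (-1) (by norm_num)))).mono
      hsub |>.intervalIntegrable_of_Icc ht.1
  have hdiss : IntervalIntegrable (fun s => ∫ x in (-1:ℝ)..0, ux s x ^ 2) volume 0 t :=
    ContinuousOn.intervalIntegrable_intervalIntegral (F := fun s x => ux s x ^ 2) ht.1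
      (by norm_num) ((hux.pow 2).mono (prod_mono hsub subset_rfl))
  rw [← intervalIntegral.integral_const_mul, ← intervalIntegral.integral_const_mul,
    ← integral_sub hflux hdiss,
    integral_sub_integral_eq_integral_integral_of_hasDerivAt
      (F := fun s x => 1 / 2 * u s x ^ 2) (F' := fun s x => u s x * ut s x)
      ht.1 (by norm_num) _ _ ((hslice 0 ⟨le_rfl, ht.1.trans ht.2⟩).const_mul _)
      ((hslice t ht).const_mul _)]
  · refine integral_congr fun s hs => ?_
    rw [uIcc_of_le ht.1] at hs
    exact (h.integral_mul_deriv_time (hsub hs)).trans (by ring)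
  · intro s hs x hx
    exact (((h.hut s (hsub hs) x hx).fun_pow 2).const_mul (1 / 2 : ℝ)).congr_deriv
      (by push_cast; ring)
  · exact (hu.mul h.contut).mono (prod_mono hsub subset_rfl)

end IsHeatSol

namespace IsWaveSol

variable {T : ℝ} {v vt vx vtt vtx vxx : ℝ → ℝ → ℝ}

theorem integral_energy_density_deriv_time (h : IsWaveSol T v vt vx vtt vtx vxx) {s : ℝ}
    (hs : s ∈ Icc 0 T) :
    ∫ x in (0:ℝ)..1, (vt s x * vtt s x + vx s x * vtx s x)
      = vt s 1 * vx s 1 - vt s 0 * vx s 0 := by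
  have hI : uIcc (0:ℝ) 1 = Icc 0 1 := uIcc_of_le zero_le_one
  have hvtx : ContinuousOn (uncurry vtx) _ := h.contvtx
  have hvxx : ContinuousOn (uncurry vxx) _ := h.contvxx
  calc ∫ x in (0:ℝ)..1, (vt s x * vtt s x + vx s x * vtx s x)
        = ∫ x in (0:ℝ)..1, (vtx s x * vx s x + vt s x * vxx s x) :=
        integral_congr fun x hx => by rw [h.wave s hs x (hI ▸ hx)]; ring
    _ = _ := integral_deriv_mul_eq_sub (fun x hx => h.hvtx s hs x (hI ▸ hx))
          (fun x hx => h.hvxx s hs x (hI ▸ hx))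
          ((hvtx.uncurry_left s hs).intervalIntegrable_of_Icc zero_le_one)
          ((hvxx.uncurry_left s hs).intervalIntegrable_of_Icc zero_le_one)

theorem energy_identity (h : IsWaveSol T v vt vx vtt vtx vxx) {t : ℝ} (ht : t ∈ Icc 0 T) :
    (1 / 2) * (∫ x in (0:ℝ)..1, (vt t x ^ 2 + vx t x ^ 2))
        - (1 / 2) * (∫ x in (0:ℝ)..1, (vt 0 x ^ 2 + vx 0 x ^ 2))
      = ∫ s in (0:ℝ)..t, (vt s 1 * vx s 1 - vt s 0 * vx s 0) := by
  have hsub : Icc 0 t ⊆ Icc 0 T := Icc_subset_Icc_right ht.2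
  have hvt : ContinuousOn (uncurry vt) _ := h.contvt
  have hvx : ContinuousOn (uncurry vx) _ := h.contvx
  have hslice : ∀ s ∈ Icc 0 T,
      IntervalIntegrable (fun x => 1 / 2 * (vt s x ^ 2 + vx s x ^ 2)) volume 0 1 :=
    fun s hs => (continuousOn_const.mul (((hvt.uncurry_left s hs).pow 2).add
      ((hvx.uncurry_left s hs).pow 2))).intervalIntegrable_of_Icc zero_le_one
  rw [← intervalIntegral.integral_const_mul, ← intervalIntegral.integral_const_mul,
    integral_sub_integral_eq_integral_integral_of_hasDerivAt
      (F := fun s x => 1 / 2 * (vt s x ^ 2 + vx s x ^ 2))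
      (F' := fun s x => vt s x * vtt s x + vx s x * vtx s x)
      ht.1 zero_le_one _ _ (hslice 0 ⟨le_rfl, ht.1.trans ht.2⟩) (hslice t ht)]
  · refine integral_congr fun s hs => ?_
    rw [uIcc_of_le ht.1] at hs
    exact h.integral_energy_density_deriv_time (hsub hs)
  · intro s hs x hx
    exact ((((h.hvtt s (hsub hs) x hx).fun_pow 2).add
      ((h.hvxt s (hsub hs) x hx).fun_pow 2)).const_mul (1 / 2 : ℝ)).congr_deriv
      (by push_cast; ring)
  · exact ((hvt.mul h.contvtt).add (hvx.mul h.contvtx)).mono (prod_mono hsub subset_rfl)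

end IsWaveSol

theorem problem1_energy_identity_general (T : ℝ)
    (u ut ux uxx v vt vx vtt vtx vxx : ℝ → ℝ → ℝ) (u₀ v₀ v₀' v₁ : ℝ → ℝ)
    (hP : Problem1 T u ut ux uxx v vt vx vtt vtx vxx u₀ v₀ v₁)
    (hv₀d : ∀ x ∈ Icc (0:ℝ) 1, HasDerivAt v₀ (v₀' x) x) :
    ∀ t ∈ Icc (0:ℝ) T,
      (1 / 2) * (∫ x in (-1:ℝ)..0, (u t x) ^ 2)
        + (1 / 2) * (∫ x in (0:ℝ)..1, ((vt t x) ^ 2 + (vx t x) ^ 2))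
        + (∫ s in (0:ℝ)..t, ∫ x in (-1:ℝ)..0, (ux s x) ^ 2)
      = (1 / 2) * (∫ x in (-1:ℝ)..0, (u₀ x) ^ 2)
        + (1 / 2) * (∫ x in (0:ℝ)..1, ((v₁ x) ^ 2 + (v₀' x) ^ 2)) := by
  intro t ht
  have h0 : (0:ℝ) ∈ Icc 0 T := ⟨le_rfl, ht.1.trans ht.2⟩
  have hvx₀ (x : ℝ) (hx : x ∈ Icc (0:ℝ) 1) : vx 0 x = v₀' x :=
    HasDerivAt.eq_of_eqOn_Icc one_pos hx (fun y hy => hP.initv y hy)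
      (hP.waveSol.hvx 0 h0 x hx) (hv₀d x hx)
  -- Only for `s > 0`: `v(·,1) ≡ 0` determines `∂_t v(s,1)` once `[0,T]` is not a point.
  have hvt₁ (s : ℝ) (hs : s ∈ Ioc 0 t) : vt s 1 = 0 := by
    have hsT : s ∈ Icc 0 T := ⟨hs.1.le, hs.2.trans ht.2⟩
    exact HasDerivAt.eq_of_eqOn_Icc (hs.1.trans_le hsT.2) hsT (fun τ hτ => hP.bdryv τ hτ)
      (hP.waveSol.hvt s hsT 1 (by norm_num)) (hasDerivAt_const s 0)
  have hflux : ∫ s in (0:ℝ)..t, (vt s 1 * vx s 1 - vt s 0 * vx s 0)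
      = -∫ s in (0:ℝ)..t, (u s 0 * ux s 0 - u s (-1) * ux s (-1)) := by
    rw [← intervalIntegral.integral_neg]
    refine integral_congr_ae (Filter.Eventually.of_forall fun s hs => ?_)
    rw [uIoc_of_le ht.1] at hs
    have hsT : s ∈ Icc 0 T := ⟨hs.1.le, hs.2.trans ht.2⟩
    rw [hvt₁ s hs, ← hP.kinematic s hsT, ← hP.dynamic s hsT, hP.bdryu s hsT]
    ring
  have hu₀ : ∫ x in (-1:ℝ)..0, u 0 x ^ 2 = ∫ x in (-1:ℝ)..0, u₀ x ^ 2 :=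
    integral_congr fun x hx => by rw [hP.initu x (by rwa [uIcc_of_le (by norm_num)] at hx)]
  have hv₀ : ∫ x in (0:ℝ)..1, (vt 0 x ^ 2 + vx 0 x ^ 2)
      = ∫ x in (0:ℝ)..1, (v₁ x ^ 2 + v₀' x ^ 2) := by
    refine integral_congr fun x hx => ?_
    rw [uIcc_of_le zero_le_one] at hx
    rw [hP.initvt x hx, hvx₀ x hx]
  linarith [hP.heatSol.energy_identity ht, hP.waveSol.energy_identity ht]

/-- Coupled energy identity for a classical solution `(u,v)` of
Problem 1 (the heat–wave system) on `[0,T]` with initial data `u₀, v₀, v₁`, `v₀`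
continuously differentiable with derivative `v₀'`:
`(1/2)∫_{−1}^0 u(t)² + (1/2)∫_0^1 ((∂_t v(t))² + (∂_x v(t))²) + ∫_0^t ∫_{−1}^0 (∂_x u)²
 = (1/2)∫_{−1}^0 u₀² + (1/2)∫_0^1 (v₁² + v₀'²)`. -/
theorem problem1_energy_identity (T : ℝ) (hT : 0 ≤ T)
    (u ut ux uxx v vt vx vtt vtx vxx : ℝ → ℝ → ℝ) (u₀ v₀ v₀' v₁ : ℝ → ℝ)
    (hP : Problem1 T u ut ux uxx v vt vx vtt vtx vxx u₀ v₀ v₁)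
    (hv₀d : ∀ x ∈ Icc (0:ℝ) 1, HasDerivAt v₀ (v₀' x) x)
    (hv₀c : ContinuousOn v₀' (Icc 0 1)) :
    ∀ t ∈ Icc (0:ℝ) T,
      (1 / 2) * (∫ x in (-1:ℝ)..0, (u t x) ^ 2)
        + (1 / 2) * (∫ x in (0:ℝ)..1, ((vt t x) ^ 2 + (vx t x) ^ 2))
        + (∫ s in (0:ℝ)..t, ∫ x in (-1:ℝ)..0, (ux s x) ^ 2)
      = (1 / 2) * (∫ x in (-1:ℝ)..0, (u₀ x) ^ 2)
        + (1 / 2) * (∫ x in (0:ℝ)..1, ((v₁ x) ^ 2 + (v₀' x) ^ 2)) :=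
  problem1_energy_identity_general T u ut ux uxx v vt vx vtt vtx vxx u₀ v₀ v₀' v₁ hP hv₀d
end
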